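/- arXiv:2106.06827 — 6 statements merged into one kernel-verified Lean document; each statement's English description precedes it below -/
import Mathlib

section
/- For a ≥ 2 and n ≥ a²+1, the maximum size mex(n;a) of a graph of order n with monophonic position number a satisfies t_{n,a} − ⌊n/a⌋·C(a,2) ≤ mex(n;a) ≤ t_{n,a} − 1, where t_{n,a} is the number of edges of the Turán graph T_{n,a}. -/
/-!
Upper bound. A clique is in monophonic position, so a graph with `mp(G) = a` is
`K_{a+1}`-free and has at most `t_{n,a}` edges by Turán's theorem, with equality only for
`T_{n,a}` itself. But induced paths of a complete multipartite graph have at most three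
vertices, so a part of `T_{n,a}`, of size at least `a + 1` when `n > a²`, is in monophonic
position and `mp(T_{n,a}) > a`.

Lower bound. Number the vertices `0, …, n - 1` so that the parts of `T_{n,a}` are the residue
classes mod `a`; every full block `{a j, …, a j + a - 1}` (`j < ⌊n/a⌋`) is then a transversal
of the parts, and we delete the `C(a,2)` edges inside each of them. The diagonal transversal
`{a k + k | k < a}` is still a clique, so `mp ≥ a`. Conversely, among `a + 1` vertices two,
`x` and `y`, lie in a common part, and together with any third vertex `z` they lie on an
induced path of at most five vertices, built from vertices of the blocks and residues of `x`,
`y`, `z`; for `n = 5`, `a = 2` the graph is itself an induced path.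
-/

open SimpleGraph

/-- A walk is an *induced (monophonic) path* if it is a path and vertices on the
walk are adjacent in `G` exactly when they are consecutive on the walk. -/
def IsInducedPathW {V : Type*} (G : SimpleGraph V) {u v : V} (p : G.Walk u v) : Prop :=
  p.IsPath ∧ ∀ a b : V, a ∈ p.support → b ∈ p.support → (G.Adj a b ↔ p.toSubgraph.Adj a b)

/-- A walk is a *geodesic* if it is a shortest path between its endpoints. -/
def IsGeodesicW {V : Type*} (G : SimpleGraph V) {u v : V} (p : G.Walk u v) : Prop :=
  p.IsPath ∧ p.length = G.dist u v

/-- A set of vertices is in *monophonic position* if no induced path of `G`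
contains more than two of its vertices. -/
def IsMpSet {V : Type*} (G : SimpleGraph V) (S : Set V) : Prop :=
  ∀ ⦃u v : V⦄ (p : G.Walk u v), IsInducedPathW G p → (S ∩ {x | x ∈ p.support}).ncard ≤ 2

/-- A set of vertices is in *general position* if no geodesic of `G` contains
more than two of its vertices. -/
def IsGpSet {V : Type*} (G : SimpleGraph V) (S : Set V) : Prop :=
  ∀ ⦃u v : V⦄ (p : G.Walk u v), IsGeodesicW G p → (S ∩ {x | x ∈ p.support}).ncard ≤ 2

/-- The monophonic position number `mp(G)`. -/
noncomputable def mpNum {V : Type*} (G : SimpleGraph V) : ℕ :=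
  sSup {n | ∃ S : Set V, IsMpSet G S ∧ S.ncard = n}

/-- The general position number `gp(G)`. -/
noncomputable def gpNum {V : Type*} (G : SimpleGraph V) : ℕ :=
  sSup {n | ∃ S : Set V, IsGpSet G S ∧ S.ncard = n}

/-- `mex n a`: the largest number of edges of a graph of order `n` with
monophonic position number `a`. -/
noncomputable def mexNum (n a : ℕ) : ℕ :=
  sSup {m | ∃ G : SimpleGraph (Fin n), mpNum G = a ∧ G.edgeSet.ncard = m}

section InducedPaths

variable {V : Type*} {G : SimpleGraph V}

theorem isInducedPathW_nil (v : V) : IsInducedPathW G (Walk.nil : G.Walk v v) := by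
  refine ⟨Walk.IsPath.nil, fun x y hx hy => ?_⟩
  simp only [Walk.support_nil, List.mem_singleton] at hx hy
  subst hx hy
  simp

theorem IsInducedPathW.cons {u v w : V} {p : G.Walk v w} (hp : IsInducedPathW G p)
    (h : G.Adj u v) (hu : u ∉ p.support) (hnadj : ∀ x ∈ p.support, x ≠ v → ¬G.Adj u x) :
    IsInducedPathW G (Walk.cons h p) := by
  have hoff : ∀ x, ¬p.toSubgraph.Adj u x := fun x hx =>
    hu (p.mem_verts_toSubgraph.mp hx.fst_mem)
  have hu' : ∀ x ∈ p.support, u ≠ x := fun x hx hux => hu (hux ▸ hx)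
  refine ⟨hp.1.cons hu, fun x y hx hy => ?_⟩
  simp only [Walk.support_cons, List.mem_cons] at hx hy
  simp only [Walk.toSubgraph, Subgraph.sup_adj, subgraphOfAdj_adj, Sym2.eq_iff]
  rcases hx with rfl | hx <;> rcases hy with rfl | hy
  · simp [hoff, h.ne']
  · have := hnadj y hy
    grind [hu' y hy, hoff y]
  · have := hnadj x hx
    grind [hu' x hx, hoff x, G.adj_symm, Subgraph.adj_symm]
  · grind [hu' x hx, hu' y hy, hp.2 x y hx hy]

theorem isInducedPathW_P2 {v₀ v₁ : V} (h₀₁ : G.Adj v₀ v₁) :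
    IsInducedPathW G (Walk.cons h₀₁ Walk.nil) :=
  (isInducedPathW_nil v₁).cons h₀₁ (by simpa using h₀₁.ne) (by simp)

theorem isInducedPathW_P3 {v₀ v₁ v₂ : V} (h₀₁ : G.Adj v₀ v₁) (h₁₂ : G.Adj v₁ v₂)
    (h₀₂ : ¬G.Adj v₀ v₂) (hne₀₂ : v₀ ≠ v₂) :
    IsInducedPathW G (Walk.cons h₀₁ (Walk.cons h₁₂ Walk.nil)) :=
  (isInducedPathW_P2 h₁₂).cons h₀₁ (by simp [h₀₁.ne, hne₀₂]) (by simp [h₀₂])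

theorem isInducedPathW_P4 {v₀ v₁ v₂ v₃ : V} (h₀₁ : G.Adj v₀ v₁) (h₁₂ : G.Adj v₁ v₂)
    (h₂₃ : G.Adj v₂ v₃) (h₀₂ : ¬G.Adj v₀ v₂) (h₀₃ : ¬G.Adj v₀ v₃) (h₁₃ : ¬G.Adj v₁ v₃)
    (hne₀₂ : v₀ ≠ v₂) (hne₀₃ : v₀ ≠ v₃) (hne₁₃ : v₁ ≠ v₃) :
    IsInducedPathW G (Walk.cons h₀₁ (Walk.cons h₁₂ (Walk.cons h₂₃ Walk.nil))) :=
  (isInducedPathW_P3 h₁₂ h₂₃ h₁₃ hne₁₃).cons h₀₁ (by simp [h₀₁.ne, hne₀₂, hne₀₃])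
    (by simp [h₀₂, h₀₃])

theorem isInducedPathW_P5 {v₀ v₁ v₂ v₃ v₄ : V} (h₀₁ : G.Adj v₀ v₁) (h₁₂ : G.Adj v₁ v₂)
    (h₂₃ : G.Adj v₂ v₃) (h₃₄ : G.Adj v₃ v₄) (h₀₂ : ¬G.Adj v₀ v₂) (h₀₃ : ¬G.Adj v₀ v₃)
    (h₀₄ : ¬G.Adj v₀ v₄) (h₁₃ : ¬G.Adj v₁ v₃) (h₁₄ : ¬G.Adj v₁ v₄) (h₂₄ : ¬G.Adj v₂ v₄)
    (hne₀₂ : v₀ ≠ v₂) (hne₀₃ : v₀ ≠ v₃) (hne₀₄ : v₀ ≠ v₄) (hne₁₃ : v₁ ≠ v₃)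
    (hne₁₄ : v₁ ≠ v₄) (hne₂₄ : v₂ ≠ v₄) :
    IsInducedPathW G (Walk.cons h₀₁ (Walk.cons h₁₂ (Walk.cons h₂₃ (Walk.cons h₃₄ Walk.nil)))) :=
  (isInducedPathW_P4 h₁₂ h₂₃ h₃₄ h₁₃ h₁₄ h₂₄ hne₁₃ hne₁₄ hne₂₄).cons h₀₁
    (by simp [h₀₁.ne, hne₀₂, hne₀₃, hne₀₄]) (by simp [h₀₂, h₀₃, h₀₄])

theorem SimpleGraph.Walk.IsPath.succ_eq_or_succ_eq_of_toSubgraph_adj {u v : V}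
    {p : G.Walk u v} (hp : p.IsPath) {i j : ℕ} (hi : i ≤ p.length) (hj : j ≤ p.length)
    (h : p.toSubgraph.Adj (p.getVert i) (p.getVert j)) : i = j + 1 ∨ j = i + 1 := by
  obtain ⟨k, hk, hklen⟩ := (Walk.toSubgraph_adj_iff _).mp h
  have hinj {m l : ℕ} (hm : m ≤ p.length) (hl : l ≤ p.length)
      (h : p.getVert m = p.getVert l) : m = l := hp.getVert_injOn hm hl h
  rcases Sym2.eq_iff.mp hk with ⟨h₁, h₂⟩ | ⟨h₁, h₂⟩
  · have := hinj (by omega) hi h₁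
    have := hinj (by omega) hj h₂
    omega
  · have := hinj (by omega) hj h₁
    have := hinj (by omega) hi h₂
    omega

theorem IsInducedPathW.eq_succ_or_of_adj_getVert {u v : V} {p : G.Walk u v}
    (hp : IsInducedPathW G p) {i j : ℕ} (hi : i ≤ p.length) (hj : j ≤ p.length)
    (h : G.Adj (p.getVert i) (p.getVert j)) : i = j + 1 ∨ j = i + 1 :=
  hp.1.succ_eq_or_succ_eq_of_toSubgraph_adj hi hj
    ((hp.2 _ _ (p.getVert_mem_support i) (p.getVert_mem_support j)).mp h)

theorem SimpleGraph.Walk.exists_getVert_mem_of_two_lt_ncard {u v : V} {S : Set V}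
    (p : G.Walk u v) (h : 2 < (S ∩ {w | w ∈ p.support}).ncard) :
    ∃ i ≤ p.length, ∃ j ≤ p.length, ∃ k ≤ p.length,
      p.getVert i ∈ S ∧ p.getVert j ∈ S ∧ p.getVert k ∈ S ∧
      p.getVert i ≠ p.getVert j ∧ p.getVert i ≠ p.getVert k ∧ p.getVert j ≠ p.getVert k := by
  obtain ⟨x, hx, y, hy, z, hz, hxy, hxz, hyz⟩ :=
    (Set.two_lt_ncard (p.support.finite_toSet.inter_of_right S)).mp h
  obtain ⟨i, rfl, hi⟩ := mem_support_iff_exists_getVert.mp hx.2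
  obtain ⟨j, rfl, hj⟩ := mem_support_iff_exists_getVert.mp hy.2
  obtain ⟨k, rfl, hk⟩ := mem_support_iff_exists_getVert.mp hz.2
  exact ⟨i, hi, j, hj, k, hk, hx.1, hy.1, hz.1, hxy, hxz, hyz⟩

end InducedPaths

section MpSets

variable {V : Type*} {G : SimpleGraph V}

theorem IsMpSet.subset {S T : Set V} (hS : IsMpSet G S) (hTS : T ⊆ S) : IsMpSet G T :=
  fun _ _ p hp => (Set.ncard_le_ncard (Set.inter_subset_inter_left _ hTS)
    (p.support.finite_toSet.inter_of_right S)).trans (hS p hp)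

theorem not_isMpSet_of_mem_support {u v x y z : V} {p : G.Walk u v}
    (hp : IsInducedPathW G p) (hx : x ∈ p.support) (hy : y ∈ p.support) (hz : z ∈ p.support)
    (hxy : x ≠ y) (hxz : x ≠ z) (hyz : y ≠ z) : ¬IsMpSet G {x, y, z} := by
  intro hS
  have hsub : ({x, y, z} : Set V) ∩ {w | w ∈ p.support} = {x, y, z} :=
    Set.inter_eq_left.mpr (by simp [Set.insert_subset_iff, hx, hy, hz])
  have := hS p hp
  rw [hsub, Set.ncard_eq_three.mpr ⟨x, y, z, hxy, hxz, hyz, rfl⟩] at this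
  omega

theorem not_isMpSet_of_adj_of_adj {x y z : V} (hxz : G.Adj x z) (hzy : G.Adj z y)
    (hxy : ¬G.Adj x y) (hne : x ≠ y) : ¬IsMpSet G {x, y, z} :=
  not_isMpSet_of_mem_support (isInducedPathW_P3 hxz hzy hxy hne) (by simp) (by simp) (by simp)
    hne hxz.ne hzy.ne'

theorem isMpSet_of_isClique {S : Set V} (hS : G.IsClique S) : IsMpSet G S := by
  intro u v p hp
  by_contra! hlt
  obtain ⟨i, hi, j, hj, k, hk, hiS, hjS, hkS, hij, hik, hjk⟩ :=
    p.exists_getVert_mem_of_two_lt_ncard hlt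
  have := hp.eq_succ_or_of_adj_getVert hi hj (hS hiS hjS hij)
  have := hp.eq_succ_or_of_adj_getVert hi hk (hS hiS hkS hik)
  have := hp.eq_succ_or_of_adj_getVert hj hk (hS hjS hkS hjk)
  omega

theorem isMpSet_of_isIndepSet {S : Set V} (hS : G.IsIndepSet S)
    (hlen : ∀ ⦃u v : V⦄ (p : G.Walk u v), IsInducedPathW G p → p.length ≤ 2) :
    IsMpSet G S := by
  intro u v p hp
  by_contra! hlt
  obtain ⟨i, hi, j, hj, k, hk, hiS, hjS, hkS, hij, hik, hjk⟩ :=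
    p.exists_getVert_mem_of_two_lt_ncard hlt
  have hp₂ : p.length ≤ 2 := hlen p hp
  -- the three distinct indices `i, j, k ≤ 2` exhaust `{0, 1, 2}`
  have hmem (m : ℕ) (hm : m ≤ 2) : p.getVert m ∈ S := by
    rcases (show m = i ∨ m = j ∨ m = k by grind) with rfl | rfl | rfl
    exacts [hiS, hjS, hkS]
  have hadj := p.adj_getVert_succ (i := 0) (by grind)
  exact hS (hmem 0 (by omega)) (hmem 1 (by omega)) hadj.ne hadj

theorem le_mpNum [Finite V] {S : Set V} (hS : IsMpSet G S) : S.ncard ≤ mpNum G :=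
  le_csSup ⟨Nat.card V, fun _ ⟨T, _, hT⟩ => hT ▸ Set.ncard_le_card T⟩ ⟨S, hS, rfl⟩

theorem mpNum_le {k : ℕ} (h : ∀ S : Set V, IsMpSet G S → S.ncard ≤ k) : mpNum G ≤ k :=
  csSup_le' fun _ ⟨S, hS, hm⟩ => hm ▸ h S hS

theorem mpNum_le_two_of_forall_mem_support {u v : V} {p : G.Walk u v}
    (hp : IsInducedPathW G p) (hsupp : ∀ x, x ∈ p.support) : mpNum G ≤ 2 :=
  mpNum_le fun S hS => by simpa [hsupp] using hS p hp

variable {W : Type*} {G' : SimpleGraph W}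

theorem IsInducedPathW.map (f : G ↪g G') {u v : V} {p : G.Walk u v}
    (hp : IsInducedPathW G p) : IsInducedPathW G' (p.map f.toHom) := by
  refine ⟨hp.1.map f.injective, fun x y hx hy => ?_⟩
  rw [Walk.support_map, List.mem_map] at hx hy
  obtain ⟨x, hx, rfl⟩ := hx
  obtain ⟨y, hy, rfl⟩ := hy
  rw [Walk.toSubgraph_map, Subgraph.map_adj]
  refine ⟨fun h => ⟨x, y, (hp.2 x y hx hy).mp (f.map_adj_iff.mp h), rfl, rfl⟩, ?_⟩
  rintro ⟨x', y', h, hx', hy'⟩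
  rw [← f.injective hx', ← f.injective hy']
  exact f.map_adj_iff.mpr h.adj_sub

theorem IsMpSet.preimage (f : G ↪g G') {S : Set W} (hS : IsMpSet G' S) :
    IsMpSet G (f ⁻¹' S) := by
  intro u v p hp
  calc (f ⁻¹' S ∩ {x | x ∈ p.support}).ncard
      = (f '' (f ⁻¹' S ∩ {x | x ∈ p.support})).ncard :=
        (Set.ncard_image_of_injective _ f.injective).symm
    _ ≤ (S ∩ {x | x ∈ (p.map f.toHom).support}).ncard := by
        refine Set.ncard_le_ncard ?_ ((p.map f.toHom).support.finite_toSet.inter_of_right S)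
        rintro _ ⟨x, ⟨hxS, hxp⟩, rfl⟩
        exact ⟨hxS, by simpa [Walk.support_map] using hxp⟩
    _ ≤ 2 := hS _ (hp.map f)

theorem mpNum_le_of_iso [Finite V] (e : G ≃g G') : mpNum G' ≤ mpNum G :=
  mpNum_le fun S hS => by
    have := le_mpNum (hS.preimage e.toEmbedding)
    rwa [Set.ncard_preimage_of_injective_subset_range e.toEmbedding.injective (by simp)] at this

end MpSets

section Turan

variable {n a : ℕ}

theorem IsInducedPathW.length_le_two_of_turanGraph {u v : Fin n}
    {p : (turanGraph n a).Walk u v} (hp : IsInducedPathW _ p) : p.length ≤ 2 := by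
  by_contra! hlen
  have hnadj {i j : ℕ} (hi : i ≤ 3) (hj : j ≤ 3) (hij : ¬(i = j + 1 ∨ j = i + 1)) :
      ¬(turanGraph n a).Adj (p.getVert i) (p.getVert j) :=
    fun h => hij (hp.eq_succ_or_of_adj_getVert (by omega) (by omega) h)
  have h₀₂ := hnadj (i := 0) (j := 2) (by omega) (by omega) (by omega)
  have h₁₃ := hnadj (i := 1) (j := 3) (by omega) (by omega) (by omega)
  have h₀₃ := hnadj (i := 0) (j := 3) (by omega) (by omega) (by omega)
  have h₂₃ : (turanGraph n a).Adj (p.getVert 2) (p.getVert 3) := p.adj_getVert_succ (by omega)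
  simp only [turanGraph_adj, not_not] at h₀₂ h₁₃ h₀₃ h₂₃
  omega

theorem isMpSet_turanGraph_of_mod_eq {S : Set (Fin n)}
    (hS : ∀ x ∈ S, ∀ y ∈ S, (x : ℕ) % a = (y : ℕ) % a) : IsMpSet (turanGraph n a) S :=
  isMpSet_of_isIndepSet (fun x hx y hy _ => by simp [turanGraph_adj, hS x hx y hy])
    fun _ _ _ hp => hp.length_le_two_of_turanGraph

theorem succ_le_mpNum_turanGraph (ha : 0 < a) (hn : a ^ 2 < n) :
    a + 1 ≤ mpNum (turanGraph n a) := by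
  have hlt (k : Fin (a + 1)) : (k : ℕ) * a < n := by
    have := Nat.mul_le_mul_right a (Nat.lt_succ_iff.mp k.2)
    nlinarith
  let f (k : Fin (a + 1)) : Fin n := ⟨k * a, hlt k⟩
  have hf : Function.Injective f := fun k l h =>
    Fin.ext (Nat.eq_of_mul_eq_mul_right ha (congrArg Fin.val h))
  have hS : IsMpSet (turanGraph n a) (Set.range f) :=
    isMpSet_turanGraph_of_mod_eq (by rintro _ ⟨k, rfl⟩ _ ⟨l, rfl⟩; simp [f])
  simpa [Set.ncard_range_of_injective hf] using le_mpNum hS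

theorem ncard_edgeSet_lt_turanGraph_of_mpNum_eq (ha : 0 < a) (hn : a ^ 2 < n)
    {G : SimpleGraph (Fin n)} (hG : mpNum G = a) :
    G.edgeSet.ncard < (turanGraph n a).edgeSet.ncard := by
  classical
  have hcf : G.CliqueFree (a + 1) := fun t ht => by
    have := le_mpNum (isMpSet_of_isClique ht.1)
    rw [Set.ncard_coe_finset, ht.2] at this
    omega
  have hT := isTuranMaximal_turanGraph (n := n) ha
  simp only [← coe_edgeFinset, Set.ncard_coe_finset]
  refine (hT.2 hcf).lt_of_ne fun heq => ?_
  -- equality would make `G` Turán-maximal, hence a copy of `T(n, a)`, whose `mp` exceeds `a`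
  have hGT : G.IsTuranMaximal a := ⟨hcf, fun H _ hH => heq ▸ hT.2 hH⟩
  obtain ⟨e⟩ := hGT.nonempty_iso_turanGraph
  rw [Fintype.card_fin] at e
  have := (succ_le_mpNum_turanGraph ha hn).trans (mpNum_le_of_iso e)
  omega

end Turan

section Construction

variable {n a : ℕ}

def blockCliques (n a : ℕ) : SimpleGraph (Fin n) where
  Adj v w := v ≠ w ∧ (v : ℕ) / a = (w : ℕ) / a ∧ (v : ℕ) / a < n / a
  symm := ⟨fun _ _ h => ⟨h.1.symm, h.2.1.symm, h.2.1 ▸ h.2.2⟩⟩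
  loopless := ⟨fun _ h => h.1 rfl⟩

def turanMinusBlockCliques (n a : ℕ) : SimpleGraph (Fin n) :=
  turanGraph n a \ blockCliques n a

def blockVertex (j : Fin (n / a)) (i : Fin a) : Fin n :=
  ⟨a * j + i, calc a * j + i < a * (j + 1) := by rw [Nat.mul_succ]; omega
    _ ≤ a * (n / a) := Nat.mul_le_mul_left a j.2
    _ ≤ n := Nat.mul_div_le n a⟩

@[simp]
theorem blockVertex_mod (j : Fin (n / a)) (i : Fin a) : (blockVertex j i : ℕ) % a = i := by
  simp [blockVertex, Nat.mod_eq_of_lt i.2]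

@[simp]
theorem blockVertex_div (j : Fin (n / a)) (i : Fin a) : (blockVertex j i : ℕ) / a = j := by
  simp [blockVertex, Nat.mul_add_div i.pos, Nat.div_eq_of_lt i.2]

theorem exists_fin_mod_eq_div_eq {i j : ℕ} (hi : i < a) (hj : j < n / a) :
    ∃ v : Fin n, (v : ℕ) % a = i ∧ (v : ℕ) / a = j :=
  ⟨blockVertex ⟨j, hj⟩ ⟨i, hi⟩, blockVertex_mod _ _, blockVertex_div _ _⟩

theorem Fin.div_ne_div_of_mod_eq {v w : Fin n} (hvw : v ≠ w)
    (h : (v : ℕ) % a = (w : ℕ) % a) : (v : ℕ) / a ≠ (w : ℕ) / a :=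
  fun h' => hvw (Fin.ext (Nat.ext_div_mod h' h))

theorem turanMinusBlockCliques_adj {v w : Fin n} :
    (turanMinusBlockCliques n a).Adj v w ↔
      (v : ℕ) % a ≠ (w : ℕ) % a ∧ ((v : ℕ) / a ≠ (w : ℕ) / a ∨ (v : ℕ) / a = n / a) := by
  have hle : (v : ℕ) / a ≤ n / a := Nat.div_le_div_right v.2.le
  by_cases hvw : v = w
  · simp [hvw]
  · simp only [turanMinusBlockCliques, sdiff_adj, turanGraph_adj, blockCliques, ne_eq, hvw,
      not_false_eq_true, true_and, not_and]
    omega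

theorem ncard_edgeSet_blockCliques_le :
    (blockCliques n a).edgeSet.ncard ≤ n / a * a.choose 2 := by
  classical
  let blockEdges : Finset (Sym2 (Fin n)) :=
    (Finset.univ ×ˢ (⊤ : SimpleGraph (Fin a)).edgeFinset).image fun e => e.2.map (blockVertex e.1)
  have hsub : (blockCliques n a).edgeFinset ⊆ blockEdges := by
    intro e he
    induction e using Sym2.ind with | _ v w => ?_
    obtain ⟨hvw, hdiv, hlt⟩ : (blockCliques n a).Adj v w := by simpa using he
    have ha : 0 < a := Nat.pos_of_ne_zero (by rintro rfl; simp at hlt)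
    have hmod : (v : ℕ) % a ≠ (w : ℕ) % a := fun h => hvw (Fin.ext (Nat.ext_div_mod hdiv h))
    refine Finset.mem_image.mpr ⟨(⟨_, hlt⟩, s(⟨_, Nat.mod_lt v ha⟩, ⟨_, Nat.mod_lt w ha⟩)),
      by simpa [Fin.ext_iff] using hmod, ?_⟩
    rw [Sym2.map_mk]
    congr 1 <;> refine Fin.ext ?_
    · exact Nat.div_add_mod v a
    · show a * ((v : ℕ) / a) + (w : ℕ) % a = w
      rw [hdiv, Nat.div_add_mod]
  calc (blockCliques n a).edgeSet.ncard
      = (blockCliques n a).edgeFinset.card := by rw [← coe_edgeFinset, Set.ncard_coe_finset]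
    _ ≤ blockEdges.card := Finset.card_le_card hsub
    _ ≤ n / a * a.choose 2 := Finset.card_image_le.trans (by
        rw [Finset.card_product, Finset.card_univ, Fintype.card_fin,
          card_edgeFinset_top_eq_card_choose_two, Fintype.card_fin])

theorem ncard_edgeSet_turanGraph_le :
    (turanGraph n a).edgeSet.ncard ≤
      (turanMinusBlockCliques n a).edgeSet.ncard + n / a * a.choose 2 := by
  rw [turanMinusBlockCliques, edgeSet_sdiff]
  exact (Set.ncard_le_ncard_sdiff_add_ncard _ _).trans
    (Nat.add_le_add_left ncard_edgeSet_blockCliques_le _)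

end Construction

section MpNumber

variable {n a : ℕ}

theorem Fin.ne_of_mod_ne_or_div_ne {v w : Fin n}
    (h : (v : ℕ) % a ≠ (w : ℕ) % a ∨ (v : ℕ) / a ≠ (w : ℕ) / a) : v ≠ w := by
  rintro rfl
  simp at h

theorem not_isMpSet_turanMinusBlockCliques_of_lt_of_lt (ha : 2 ≤ a) {x y z : Fin n}
    (hxy : x ≠ y) (hxz : x ≠ z) (hyz : y ≠ z)
    (hxy' : (x : ℕ) % a = (y : ℕ) % a) (hxz' : (x : ℕ) % a = (z : ℕ) % a)
    (hx : (x : ℕ) / a < n / a) (hz : (z : ℕ) / a < n / a) :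
    ¬IsMpSet (turanMinusBlockCliques n a) {x, y, z} := by
  have := Fin.div_ne_div_of_mod_eq hxy hxy'
  have := Fin.div_ne_div_of_mod_eq hxz hxz'
  have := Fin.div_ne_div_of_mod_eq hyz (hxy'.symm.trans hxz')
  obtain ⟨i, hi, hix⟩ : ∃ i < a, i ≠ (x : ℕ) % a :=
    ⟨if (x : ℕ) % a = 0 then 1 else 0, by split <;> omega, by split <;> omega⟩
  -- the induced path `x - u - y - w - z`, with `u`, `w` of a new residue in the blocks of `z`, `x`
  obtain ⟨u, hu, hu'⟩ := exists_fin_mod_eq_div_eq hi hz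
  obtain ⟨w, hw, hw'⟩ := exists_fin_mod_eq_div_eq hi hx
  refine not_isMpSet_of_mem_support
    (isInducedPathW_P5 (v₀ := x) (v₁ := u) (v₂ := y) (v₃ := w) (v₄ := z)
      ?_ ?_ ?_ ?_ ?_ ?_ ?_ ?_ ?_ ?_ ?_ ?_ ?_ ?_ ?_ ?_) ?_ ?_ ?_ hxy hxz hyz
  all_goals first
    | rw [turanMinusBlockCliques_adj]; omega
    | exact Fin.ne_of_mod_ne_or_div_ne (a := a) (by omega)
    | simp

theorem not_isMpSet_turanMinusBlockCliques_of_mod_eq_of_mod_eq (ha : 2 ≤ a) {x y z : Fin n}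
    (hxy : x ≠ y) (hxz : x ≠ z) (hyz : y ≠ z)
    (hxy' : (x : ℕ) % a = (y : ℕ) % a) (hxz' : (x : ℕ) % a = (z : ℕ) % a) :
    ¬IsMpSet (turanMinusBlockCliques n a) {x, y, z} := by
  have hle (v : Fin n) : (v : ℕ) / a ≤ n / a := Nat.div_le_div_right v.2.le
  have := Fin.div_ne_div_of_mod_eq hxy hxy'
  have := Fin.div_ne_div_of_mod_eq hxz hxz'
  have := Fin.div_ne_div_of_mod_eq hyz (hxy'.symm.trans hxz')
  have := hle x
  have := hle y
  have := hle z
  -- at most one of the three lies in the last block; put it in the middle of the path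
  by_cases hx : (x : ℕ) / a = n / a
  · rw [Set.insert_comm]
    exact not_isMpSet_turanMinusBlockCliques_of_lt_of_lt ha hxy.symm hyz hxz
      hxy'.symm (hxy'.symm.trans hxz') (by omega) (by omega)
  by_cases hz : (z : ℕ) / a = n / a
  · rw [Set.pair_comm]
    exact not_isMpSet_turanMinusBlockCliques_of_lt_of_lt ha hxz hxy hyz.symm hxz' hxy'
      (by omega) (by omega)
  exact not_isMpSet_turanMinusBlockCliques_of_lt_of_lt ha hxy hxz hyz hxy' hxz'
    (by omega) (by omega)

theorem not_isMpSet_turanMinusBlockCliques_of_not_adj (hJ : 3 ≤ n / a) {x y z : Fin n}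
    (hxy : x ≠ y) (hxy' : (x : ℕ) % a = (y : ℕ) % a) (hzx' : (z : ℕ) % a ≠ (x : ℕ) % a)
    (hzx : ¬(turanMinusBlockCliques n a).Adj z x) :
    ¬IsMpSet (turanMinusBlockCliques n a) {x, y, z} := by
  have ha : 0 < a := Nat.pos_of_ne_zero (by rintro rfl; simp at hJ)
  have := Fin.div_ne_div_of_mod_eq hxy hxy'
  rw [turanMinusBlockCliques_adj] at hzx
  obtain ⟨j, hj, hjx, hjy⟩ : ∃ j < n / a, j ≠ (x : ℕ) / a ∧ j ≠ (y : ℕ) / a := by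
    by_contra! h
    have := h 0
    have := h 1
    have := h 2
    omega
  -- `z` lies in the block of `x`; take the path `x - u - y - z` with `u` of residue `z % a`
  -- in a third block
  obtain ⟨u, hu, hu'⟩ := exists_fin_mod_eq_div_eq (Nat.mod_lt z ha) hj
  refine not_isMpSet_of_mem_support
    (isInducedPathW_P4 (v₀ := x) (v₁ := u) (v₂ := y) (v₃ := z) ?_ ?_ ?_ ?_ ?_ ?_ ?_ ?_ ?_)
    ?_ ?_ ?_ hxy ?_ ?_
  all_goals first
    | rw [turanMinusBlockCliques_adj]; omega
    | exact Fin.ne_of_mod_ne_or_div_ne (a := a) (by omega)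
    | simp

theorem not_isMpSet_turanMinusBlockCliques (ha : 2 ≤ a) (hJ : 3 ≤ n / a) {x y z : Fin n}
    (hxy : x ≠ y) (hxz : x ≠ z) (hyz : y ≠ z) (hxy' : (x : ℕ) % a = (y : ℕ) % a) :
    ¬IsMpSet (turanMinusBlockCliques n a) {x, y, z} := by
  by_cases hzx' : (z : ℕ) % a = (x : ℕ) % a
  · exact not_isMpSet_turanMinusBlockCliques_of_mod_eq_of_mod_eq ha hxy hxz hyz hxy' hzx'.symm
  by_cases hzx : (turanMinusBlockCliques n a).Adj z x
  · by_cases hzy : (turanMinusBlockCliques n a).Adj z y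
    · exact not_isMpSet_of_adj_of_adj hzx.symm hzy
        (by rw [turanMinusBlockCliques_adj]; omega) hxy
    · rw [Set.insert_comm]
      exact not_isMpSet_turanMinusBlockCliques_of_not_adj hJ hxy.symm hxy'.symm (by omega) hzy
  · exact not_isMpSet_turanMinusBlockCliques_of_not_adj hJ hxy hxy' hzx' hzx

theorem mpNum_turanMinusBlockCliques_le (ha : 2 ≤ a) (hJ : 3 ≤ n / a) :
    mpNum (turanMinusBlockCliques n a) ≤ a := by
  refine mpNum_le fun S hS => ?_
  by_contra! hlt
  obtain ⟨x, hx, y, hy, hxy, hxy'⟩ := Set.exists_ne_map_eq_of_ncard_lt_of_maps_to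
    (t := (Finset.range a : Set ℕ)) (f := fun v : Fin n => (v : ℕ) % a) (by simpa using hlt)
    (fun v _ => by simpa using Nat.mod_lt _ (by omega))
  obtain ⟨z, hz, hzxy⟩ := Set.exists_mem_notMem_of_ncard_lt_ncard (s := {x, y}) (t := S)
    (by rw [Set.ncard_pair hxy]; omega)
  simp only [Set.mem_insert_iff, Set.mem_singleton_iff, not_or] at hzxy
  exact not_isMpSet_turanMinusBlockCliques ha hJ hxy (Ne.symm hzxy.1) (Ne.symm hzxy.2) hxy'
    (hS.subset (by simp [Set.insert_subset_iff, hx, hy, hz]))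

-- `turanMinusBlockCliques 5 2` is the path `0 - 3 - 4 - 1 - 2`
theorem mpNum_turanMinusBlockCliques_five_two : mpNum (turanMinusBlockCliques 5 2) ≤ 2 := by
  refine mpNum_le_two_of_forall_mem_support (isInducedPathW_P5 (v₀ := 0) (v₁ := 3) (v₂ := 4)
    (v₃ := 1) (v₄ := 2) ?_ ?_ ?_ ?_ ?_ ?_ ?_ ?_ ?_ ?_ ?_ ?_ ?_ ?_ ?_ ?_) ?_
  all_goals first
    | rw [turanMinusBlockCliques_adj]; decide
    | decide

theorem le_mpNum_turanMinusBlockCliques (ha : a ≤ n / a) :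
    a ≤ mpNum (turanMinusBlockCliques n a) := by
  let f (k : Fin a) : Fin n := blockVertex ⟨k, k.2.trans_le ha⟩ k
  have hf : Function.Injective f := fun k l h => Fin.ext (by
    simpa [f] using congrArg (fun v : Fin n => (v : ℕ) % a) h)
  have hclique : (turanMinusBlockCliques n a).IsClique (Set.range f) := by
    rintro _ ⟨k, rfl⟩ _ ⟨l, rfl⟩ hkl
    have : (k : ℕ) ≠ l := fun h => hkl (congrArg f (Fin.ext h))
    simp [turanMinusBlockCliques_adj, f, this]
  simpa [Set.ncard_range_of_injective hf] using le_mpNum (isMpSet_of_isClique hclique)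

theorem mpNum_turanMinusBlockCliques (ha : 2 ≤ a) (hn : a ^ 2 < n) :
    mpNum (turanMinusBlockCliques n a) = a := by
  have hJ : a ≤ n / a := (Nat.le_div_iff_mul_le (by omega)).mpr (by nlinarith)
  refine le_antisymm ?_ (le_mpNum_turanMinusBlockCliques hJ)
  rcases (show 3 ≤ n / a ∨ n / a = 2 by omega) with hJ3 | hJ2
  · exact mpNum_turanMinusBlockCliques_le ha hJ3
  · obtain rfl : a = 2 := by omega
    obtain rfl : n = 5 := by omega
    exact mpNum_turanMinusBlockCliques_five_two

end MpNumber

theorem le_mexNum {n : ℕ} {G : SimpleGraph (Fin n)} : G.edgeSet.ncard ≤ mexNum n (mpNum G) :=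
  le_csSup ⟨Nat.card (Sym2 (Fin n)), by rintro _ ⟨_, -, rfl⟩; exact Set.ncard_le_card _⟩
    ⟨G, rfl, rfl⟩

theorem mexNum_le {n a m : ℕ}
    (h : ∀ G : SimpleGraph (Fin n), mpNum G = a → G.edgeSet.ncard ≤ m) : mexNum n a ≤ m :=
  csSup_le' fun _ ⟨G, hG, hm⟩ => hm ▸ h G hG

theorem mexNum_asymptotic (a n : ℕ) (ha : 2 ≤ a) (hn : a ^ 2 + 1 ≤ n) :
    (turanGraph n a).edgeSet.ncard - (n / a) * a.choose 2 ≤ mexNum n a ∧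
    mexNum n a ≤ (turanGraph n a).edgeSet.ncard - 1 := by
  constructor
  · have hH := le_mexNum (G := turanMinusBlockCliques n a)
    rw [mpNum_turanMinusBlockCliques ha hn] at hH
    have := ncard_edgeSet_turanGraph_le (n := n) (a := a)
    omega
  · refine mexNum_le fun G hG => ?_
    have := ncard_edgeSet_lt_turanGraph_of_mpNum_eq (by omega) hn hG
    omega
end

section
/- For a ≥ 3, every graph G of order n with general position number gp(G) = a has maximum degree at most R(a, a+1) − 1, and hence has at most n·(R(a,a+1)−1)/2 edges, where R(s,t) is the Ramsey number. -/
open SimpleGraph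

/-- The Ramsey number `R(s,t)`: the smallest `n` such that every graph on `n`
vertices contains a clique of size `s` or an independent set of size `t`. -/
noncomputable def ramseyNum (s t : ℕ) : ℕ :=
  sInf {n | ∀ G : SimpleGraph (Fin n),
    (∃ A : Finset (Fin n), G.IsNClique s A) ∨
    (∃ B : Finset (Fin n), B.card = t ∧ ∀ a ∈ B, ∀ b ∈ B, ¬ G.Adj a b)}


section Aux
variable {V : Type*} {G : SimpleGraph V}

lemma geodesic_split [DecidableEq V] {u v x : V} {p : G.Walk u v} (hp : IsGeodesicW G p)
    (hx : x ∈ p.support) :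
    IsGeodesicW G (p.takeUntil x hx) ∧ IsGeodesicW G (p.dropUntil x hx) ∧
      G.dist u x + G.dist x v = G.dist u v := by
  obtain ⟨hpath, hlen⟩ := hp
  have h1 : G.dist u x ≤ (p.takeUntil x hx).length := SimpleGraph.dist_le _
  have h2 : G.dist x v ≤ (p.dropUntil x hx).length := SimpleGraph.dist_le _
  have hsum : (p.takeUntil x hx).length + (p.dropUntil x hx).length = p.length := by
    conv_rhs => rw [← p.take_spec hx]
    rw [Walk.length_append]
  have htri : G.dist u v ≤ G.dist u x + G.dist x v := by
    have hrux : G.Reachable u x := ⟨p.takeUntil x hx⟩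
    have hrxv : G.Reachable x v := ⟨p.dropUntil x hx⟩
    obtain ⟨q', hq'⟩ := hrux.exists_walk_length_eq_dist
    obtain ⟨r', hr'⟩ := hrxv.exists_walk_length_eq_dist
    calc G.dist u v ≤ (q'.append r').length := SimpleGraph.dist_le _
    _ = G.dist u x + G.dist x v := by rw [Walk.length_append, hq', hr']
  exact ⟨⟨hpath.takeUntil hx, by omega⟩, ⟨hpath.dropUntil hx, by omega⟩, by omega⟩

lemma geodesic_dist_rel [DecidableEq V] {u v y z : V} {p : G.Walk u v} (hp : IsGeodesicW G p)
    (hy : y ∈ p.support) (hz : z ∈ p.support) :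
    G.dist u y + G.dist y z = G.dist u z ∨ G.dist u z + G.dist y z = G.dist u y := by
  obtain ⟨hq, hr, hsz⟩ := geodesic_split hp hz
  have hy' : y ∈ (p.takeUntil z hz).support ∨ y ∈ (p.dropUntil z hz).support := by
    have hspec := p.take_spec hz
    rw [← hspec, Walk.mem_support_append_iff] at hy
    exact hy
  rcases hy' with hmem | hmem
  · exact Or.inl (geodesic_split hq hmem).2.2
  · obtain ⟨-, -, hs⟩ := geodesic_split hr hmem
    obtain ⟨-, -, hsy⟩ := geodesic_split hp hy
    have hc : G.dist y z = G.dist z y := SimpleGraph.dist_comm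
    right
    omega

lemma isGpSet_of_pairwise_dist [DecidableEq V] {d : ℕ} (hd : 1 ≤ d) {S : Set V}
    (h : ∀ x ∈ S, ∀ y ∈ S, x ≠ y → G.dist x y = d) : IsGpSet G S := by
  classical
  intro u v p hp
  by_contra hcon
  push_neg at hcon
  set F : Finset V := p.support.toFinset.filter (· ∈ S) with hF
  have hEq : (S ∩ {x | x ∈ p.support}) = ↑F := by
    ext w
    simp only [hF, Finset.coe_filter, List.mem_toFinset, Set.mem_setOf_eq, Set.mem_inter_iff,
      Set.mem_setOf_eq]
    tauto
  rw [hEq, Set.ncard_coe_finset] at hcon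
  obtain ⟨x, hx, y, hy, z, hz, hxy, hxz, hyz⟩ := Finset.two_lt_card.mp hcon
  simp only [hF, Finset.mem_filter, List.mem_toFinset] at hx hy hz
  have rxy := geodesic_dist_rel hp hx.1 hy.1
  have ryz := geodesic_dist_rel hp hy.1 hz.1
  have rxz := geodesic_dist_rel hp hx.1 hz.1
  rw [h x hx.2 y hy.2 hxy] at rxy
  rw [h y hy.2 z hz.2 hyz] at ryz
  rw [h x hx.2 z hz.2 hxz] at rxz
  omega

end Aux

theorem ramsey_exists (s t : ℕ) :
    ∃ n : ℕ, ∀ (W : Type) (G : SimpleGraph W) (A : Finset W), n ≤ A.card →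
      (∃ C ⊆ A, G.IsNClique s C) ∨
      (∃ I ⊆ A, I.card = t ∧ ∀ a ∈ I, ∀ b ∈ I, ¬ G.Adj a b) := by
  induction s generalizing t with
  | zero =>
    exact ⟨0, fun W G A _ =>
      Or.inl ⟨∅, Finset.empty_subset _, by simp⟩⟩
  | succ s ihs =>
    induction t with
    | zero =>
      exact ⟨0, fun W G A _ =>
        Or.inr ⟨∅, Finset.empty_subset _, by simp⟩⟩
    | succ t iht =>
      obtain ⟨n₁, h₁⟩ := ihs (t + 1)
      obtain ⟨n₂, h₂⟩ := iht
      refine ⟨n₁ + n₂ + 1, fun W G A hA => ?_⟩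
      classical
      obtain ⟨v, hv⟩ : ∃ v, v ∈ A := Finset.card_pos.mp (by omega)
      set A' := A.erase v with hA'
      have hcardA' : n₁ + n₂ ≤ A'.card := by
        rw [hA', Finset.card_erase_of_mem hv]
        omega
      set N := A'.filter (fun w => G.Adj v w) with hN
      set M := A'.filter (fun w => ¬ G.Adj v w) with hM
      have hNM : N.card + M.card = A'.card := Finset.card_filter_add_card_filter_not _
      rcases le_or_gt n₁ N.card with hle | hlt
      · rcases h₁ W G N hle with ⟨C, hCN, hC⟩ | ⟨I, hIN, hI⟩
        · refine Or.inl ⟨insert v C, ?_, hC.insert fun b hb => (Finset.mem_filter.mp (hCN hb)).2⟩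
          intro w hw
          rcases Finset.mem_insert.mp hw with rfl | hw
          · exact hv
          · exact Finset.erase_subset _ _ (Finset.filter_subset _ _ (hCN hw))
        · exact Or.inr ⟨I, fun w hw =>
            Finset.erase_subset _ _ (Finset.filter_subset _ _ (hIN hw)), hI⟩
      · have hle2 : n₂ ≤ M.card := by omega
        rcases h₂ W G M hle2 with ⟨C, hCM, hC⟩ | ⟨I, hIM, hIcard, hI⟩
        · exact Or.inl ⟨C, fun w hw =>
            Finset.erase_subset _ _ (Finset.filter_subset _ _ (hCM hw)), hC⟩
        · have hvI : v ∉ I := fun hvI => (Finset.notMem_erase v A)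
            (Finset.filter_subset _ _ (hIM hvI))
          refine Or.inr ⟨insert v I, ?_, ?_, ?_⟩
          · intro w hw
            rcases Finset.mem_insert.mp hw with rfl | hw
            · exact hv
            · exact Finset.erase_subset _ _ (Finset.filter_subset _ _ (hIM hw))
          · rw [Finset.card_insert_of_notMem hvI, hIcard]
          · have key : ∀ w ∈ I, ¬ G.Adj v w := fun w hw =>
              (Finset.mem_filter.mp (hIM hw)).2
            intro x hx y hy
            rcases Finset.mem_insert.mp hx with hx' | hx'
            · rcases Finset.mem_insert.mp hy with hy' | hy'
              · subst hx'; subst hy'; exact G.irrefl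
              · subst hx'; exact key y hy'
            · rcases Finset.mem_insert.mp hy with hy' | hy'
              · subst hy'; exact fun hadj => key x hx' hadj.symm
              · exact hI x hx' y hy'


theorem gpNum_maxDegree_ramsey {V : Type*} [Fintype V] (G : SimpleGraph V) (a : ℕ)
    (ha : 3 ≤ a) (h : gpNum G = a) :
    (∀ v : V, (G.neighborSet v).ncard ≤ ramseyNum a (a + 1) - 1) ∧
    2 * G.edgeSet.ncard ≤ Fintype.card V * (ramseyNum a (a + 1) - 1) := by
  classical
  have hbdd : BddAbove {n | ∃ S : Set V, IsGpSet G S ∧ S.ncard = n} := by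
    refine ⟨Fintype.card V, fun n hn => ?_⟩
    obtain ⟨S, _, rfl⟩ := hn
    calc S.ncard ≤ (Set.univ : Set V).ncard :=
          Set.ncard_le_ncard (Set.subset_univ S) Set.finite_univ
    _ = Fintype.card V := by rw [Set.ncard_univ, Nat.card_eq_fintype_card]
  have hgp : ∀ S : Set V, IsGpSet G S → S.ncard ≤ a := by
    intro S hS
    rw [← h]
    exact le_csSup hbdd ⟨S, hS, rfl⟩
  obtain ⟨N, hN⟩ := ramsey_exists a (a + 1)
  have hne : Set.Nonempty {n | ∀ G : SimpleGraph (Fin n),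
      (∃ A : Finset (Fin n), G.IsNClique a A) ∨
      (∃ B : Finset (Fin n), B.card = a + 1 ∧ ∀ x ∈ B, ∀ y ∈ B, ¬ G.Adj x y)} := by
    refine ⟨N, fun G' => ?_⟩
    rcases hN (Fin N) G' Finset.univ (by simp) with ⟨C, _, hC⟩ | ⟨I, _, hIcard, hI⟩
    · exact Or.inl ⟨C, hC⟩
    · exact Or.inr ⟨I, hIcard, hI⟩
  have hmem : ∀ G' : SimpleGraph (Fin (ramseyNum a (a + 1))),
      (∃ A : Finset (Fin (ramseyNum a (a + 1))), G'.IsNClique a A) ∨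
      (∃ B : Finset (Fin (ramseyNum a (a + 1))), B.card = a + 1 ∧
        ∀ x ∈ B, ∀ y ∈ B, ¬ G'.Adj x y) :=
    Nat.sInf_mem hne
  have key : ∀ v : V, (G.neighborSet v).ncard < ramseyNum a (a + 1) := by
    intro v
    by_contra hcon
    push_neg at hcon
    have hfin : (G.neighborSet v).ncard = (G.neighborFinset v).card := by
      rw [neighborFinset_def]
      exact Set.ncard_eq_toFinset_card' _
    obtain ⟨T, hT, hTcard⟩ := Finset.exists_subset_card_eq
      (show ramseyNum a (a + 1) ≤ (G.neighborFinset v).card by omega)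
    have e : Fin (ramseyNum a (a + 1)) ≃ T := (T.equivFin.trans (finCongr hTcard)).symm
    set f : Fin (ramseyNum a (a + 1)) → V := fun i => ((e i : T) : V) with hf
    have hfinj : Function.Injective f := fun i j hij => e.injective (Subtype.ext hij)
    have hfN : ∀ i, G.Adj v (f i) := fun i => by
      have hmem' : f i ∈ G.neighborFinset v := hT (e i).2
      exact (mem_neighborFinset _ _ _).mp hmem'
    rcases hmem (G.comap f) with ⟨A, hA⟩ | ⟨B, hBcard, hB⟩
    · set C : Finset V := insert v (A.image f) with hC
      have hvim : v ∉ A.image f := by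
        intro hmem'
        obtain ⟨i, _, hi⟩ := Finset.mem_image.mp hmem'
        exact G.irrefl (hi ▸ hfN i)
      have hCcard : C.card = a + 1 := by
        rw [hC, Finset.card_insert_of_notMem hvim,
          Finset.card_image_of_injective _ hfinj, hA.card_eq]
      have hpair : ∀ x ∈ (C : Set V), ∀ y ∈ (C : Set V), x ≠ y → G.dist x y = 1 := by
        intro x hx y hy hxy
        rw [SimpleGraph.dist_eq_one_iff_adj]
        simp only [hC, Finset.coe_insert, Set.mem_insert_iff, Finset.mem_coe] at hx hy
        rcases hx with hx' | hx'
        · rcases hy with hy' | hy'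
          · exact absurd (hx'.trans hy'.symm) hxy
          · obtain ⟨j, _, rfl⟩ := Finset.mem_image.mp hy'
            exact hx' ▸ hfN j
        · obtain ⟨i, hi, rfl⟩ := Finset.mem_image.mp hx'
          rcases hy with hy' | hy'
          · exact hy' ▸ (hfN i).symm
          · obtain ⟨j, hj, rfl⟩ := Finset.mem_image.mp hy'
            have hij : i ≠ j := fun hij => hxy (by rw [hij])
            exact hA.isClique hi hj hij
      have hgpC := isGpSet_of_pairwise_dist le_rfl hpair
      have hle := hgp _ hgpC
      rw [Set.ncard_coe_finset, hCcard] at hle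
      omega
    · set I : Finset V := B.image f with hI
      have hIcard : I.card = a + 1 := by
        rw [hI, Finset.card_image_of_injective _ hfinj, hBcard]
      have hpair : ∀ x ∈ (I : Set V), ∀ y ∈ (I : Set V), x ≠ y → G.dist x y = 2 := by
        intro x hx y hy hxy
        rw [Finset.mem_coe, hI] at hx hy
        obtain ⟨i, hi, rfl⟩ := Finset.mem_image.mp hx
        obtain ⟨j, hj, rfl⟩ := Finset.mem_image.mp hy
        have hnadj : ¬ G.Adj (f i) (f j) := hB i hi j hj
        set p2 : G.Walk (f i) (f j) := Walk.cons (hfN i).symm (Walk.cons (hfN j) Walk.nil)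
          with hp2
        have hle2 : G.dist (f i) (f j) ≤ 2 := by
          have := SimpleGraph.dist_le p2
          simpa [hp2] using this
        have hne0 : G.dist (f i) (f j) ≠ 0 := by
          rw [SimpleGraph.dist_ne_zero_iff_ne_and_reachable]
          exact ⟨hxy, ⟨p2⟩⟩
        have hne1 : G.dist (f i) (f j) ≠ 1 := by
          rw [Ne, SimpleGraph.dist_eq_one_iff_adj]
          exact hnadj
        omega
      have hgpI := isGpSet_of_pairwise_dist (by norm_num : (1:ℕ) ≤ 2) hpair
      have hle := hgp _ hgpI
      rw [Set.ncard_coe_finset, hIcard] at hle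
      omega
  refine ⟨fun v => by have := key v; omega, ?_⟩
  have hedge : G.edgeSet.ncard = G.edgeFinset.card := by
    rw [← coe_edgeFinset, Set.ncard_coe_finset]
  have hdeg : ∀ v : V, G.degree v ≤ ramseyNum a (a + 1) - 1 := by
    intro v
    have h1 := key v
    have h2 : (G.neighborSet v).ncard = G.degree v := by
      rw [show G.degree v = (G.neighborFinset v).card from rfl, neighborFinset_def]
      exact Set.ncard_eq_toFinset_card' _
    omega
  calc 2 * G.edgeSet.ncard = ∑ v, G.degree v := by
        rw [hedge, G.sum_degrees_eq_twice_card_edges]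
  _ ≤ ∑ _v : V, (ramseyNum a (a + 1) - 1) := Finset.sum_le_sum fun v _ => hdeg v
  _ = Fintype.card V * (ramseyNum a (a + 1) - 1) := by
        rw [Finset.sum_const, Finset.card_univ, smul_eq_mul]
end

section
/- If G is a graph of order n whose longest induced path has length L, then mp(G) ≥ a implies L ≤ n − a + 1; consequently, the diameter of a graph of order n with monophonic position number a is at most n − a + 1. -/
open SimpleGraph

/-- On a shortest walk, any two adjacent vertices are joined by an edge of the walk. -/
lemma geodesic_edge {V : Type*} {G : SimpleGraph V} :
    ∀ {u v : V} (p : G.Walk u v), p.length = G.dist u v →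
      ∀ {a b : V}, G.Adj a b → a ∈ p.support → b ∈ p.support → s(a, b) ∈ p.edges := by
  classical
  intro u v p
  induction p with
  | nil =>
    intro _ a b hab ha hb
    simp only [Walk.support_nil, List.mem_singleton] at ha hb
    subst ha; subst hb
    exact absurd hab (G.irrefl)
  | @cons u w v h q ih =>
    intro hp a b hab ha hb
    have hlen : (Walk.cons h q).length = q.length + 1 := by simp
    -- q is also a geodesic
    have hq : q.length = G.dist w v := by
      have h1 : G.dist w v ≤ q.length := SimpleGraph.dist_le q
      have hrwv : G.Reachable w v := ⟨q⟩
      obtain ⟨r, _, hr⟩ := hrwv.exists_path_of_dist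
      have h2 : G.dist u v ≤ G.dist w v + 1 := by
        have := SimpleGraph.dist_le (Walk.cons h r)
        simpa [hr] using this
      omega
    simp only [Walk.support_cons, List.mem_cons] at ha hb
    -- helper for the case a = u, b ∈ q.support
    have main : ∀ {b : V} (hab : G.Adj u b), b ∈ q.support → s(u, b) ∈ (Walk.cons h q).edges := by
      intro b hab hbq
      have hsplit : (q.takeUntil b hbq).length + (q.dropUntil b hbq).length = q.length := by
        rw [← Walk.length_append, q.take_spec hbq]
      have hshort : G.dist u v ≤ (q.dropUntil b hbq).length + 1 := by
        have := SimpleGraph.dist_le (Walk.cons hab (q.dropUntil b hbq))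
        simpa using this
      have htake0 : (q.takeUntil b hbq).length = 0 := by omega
      have hwb : w = b := Walk.eq_of_length_eq_zero htake0
      subst hwb
      simp [Walk.edges_cons]
    rcases ha with ha | ha <;> rcases hb with hb | hb
    · subst ha; subst hb; exact absurd hab (G.irrefl)
    · subst ha; exact main hab hb
    · subst hb
      have := main hab.symm ha
      simpa [Sym2.eq_swap] using this
    · have := ih hq hab ha hb
      simp [Walk.edges_cons, this]

/-- A geodesic is an induced path. -/
lemma isInducedPathW_of_geodesic {V : Type*} {G : SimpleGraph V} {u v : V}
    (p : G.Walk u v) (hp : p.IsPath) (hd : p.length = G.dist u v) : IsInducedPathW G p := by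
  refine ⟨hp, fun a b ha hb => ⟨fun hab => ?_, fun hab => p.toSubgraph.adj_sub hab⟩⟩
  have : s(a, b) ∈ p.edges := geodesic_edge p hd hab ha hb
  exact (SimpleGraph.Subgraph.mem_edgeSet).mp ((p.mem_edges_toSubgraph).mpr this)

theorem longest_induced_path_bound {V : Type*} [Fintype V] (G : SimpleGraph V) (L a : ℕ)
    (hub : ∀ ⦃u v : V⦄ (p : G.Walk u v), IsInducedPathW G p → p.length ≤ L)
    (hex : ∃ (u v : V) (p : G.Walk u v), IsInducedPathW G p ∧ p.length = L) :
    (a ≤ mpNum G → L ≤ Fintype.card V - a + 1) ∧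
    (mpNum G = a → G.diam ≤ Fintype.card V - a + 1) := by
  classical
  set n := Fintype.card V with hn
  have part1 : a ≤ mpNum G → L ≤ n - a + 1 := by
    intro hmp
    obtain ⟨u, v, p, hind, hpl⟩ := hex
    -- the monophonic position number is attained
    have hbdd : ∀ m ∈ {m | ∃ S : Set V, IsMpSet G S ∧ S.ncard = m}, m ≤ n := by
      rintro m ⟨S, _, rfl⟩
      calc S.ncard ≤ (Set.univ : Set V).ncard := Set.ncard_le_ncard (Set.subset_univ S)
        _ = n := by simp [Set.ncard_univ, hn]
    have hne : {m | ∃ S : Set V, IsMpSet G S ∧ S.ncard = m}.Nonempty := by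
      refine ⟨0, ∅, fun u v p hp => ?_, by simp⟩
      simp
    have hmem := Nat.sSup_mem hne ⟨n, hbdd⟩
    obtain ⟨S, hS, hScard⟩ := hmem
    set P : Set V := {x | x ∈ p.support} with hPdef
    have hPcard : P.ncard = L + 1 := by
      have h1 : P = (p.support.toFinset : Set V) := by
        ext x; simp [hPdef]
      rw [h1, Set.ncard_coe_finset, List.toFinset_card_of_nodup hind.1.support_nodup,
        Walk.length_support, hpl]
    have h2 : (S ∩ P).ncard ≤ 2 := hS p hind
    have h3 : (S ∩ P).ncard + (S \ P).ncard = S.ncard :=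
      Set.ncard_inter_add_ncard_diff_eq_ncard S P
    have h4 : (S \ P).ncard + P.ncard ≤ n := by
      rw [← Set.ncard_union_eq Set.disjoint_sdiff_left]
      calc ((S \ P) ∪ P).ncard ≤ (Set.univ : Set V).ncard :=
            Set.ncard_le_ncard (Set.subset_univ _)
        _ = n := by simp [Set.ncard_univ, hn]
    have h5 : a ≤ S.ncard := hScard ▸ hmp
    omega
  refine ⟨part1, fun heq => ?_⟩
  have hLa : L ≤ n - a + 1 := part1 (le_of_eq heq.symm)
  -- it suffices to show diam ≤ L
  have hdiam : G.diam ≤ L := by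
    by_cases htop : G.ediam = ⊤
    · simp [SimpleGraph.diam_eq_zero_of_ediam_eq_top htop]
    · have hle : G.ediam ≤ (L : ℕ∞) := by
        apply SimpleGraph.ediam_le_of_edist_le
        intro x y
        by_cases hr : G.Reachable x y
        · obtain ⟨q, hq, hql⟩ := hr.exists_path_of_dist
          have := hub q (isInducedPathW_of_geodesic q hq hql)
          calc G.edist x y ≤ (q.length : ℕ∞) := SimpleGraph.edist_le q
            _ ≤ (L : ℕ∞) := by exact_mod_cast this
        · exact absurd (le_antisymm le_top
            ((SimpleGraph.edist_eq_top_of_not_reachable hr) ▸ SimpleGraph.edist_le_ediam)) htop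
      exact ENat.toNat_le_of_le_coe hle
  omega
end

section
/- For integers n and a with 3 ≤ a ≤ n − 2, the graph F obtained from a path u_0, u_1, ..., u_{n−a} by adding a−1 new vertices v_1, ..., v_{a−1} each adjacent to both u_0 and u_1 has order n, monophonic position number a, and diameter n − a. -/
open SimpleGraph

/-- The graph `F(n,a,n-a)`: a path `u₀, u₁, …, u_{n-a}` together with `a - 1`
new vertices each adjacent to both `u₀` and `u₁`. -/
def flagellumGraph (n a : ℕ) : SimpleGraph (Fin (n - a + 1) ⊕ Fin (a - 1)) :=
  SimpleGraph.fromRel fun u v =>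
    match u, v with
    | .inl i, .inl j => (i : ℕ) + 1 = (j : ℕ)
    | .inr _, .inl i => (i : ℕ) = 0 ∨ (i : ℕ) = 1
    | _, _ => False

/-!
The legs `v_i` and the far end `u_{n-a}` have cliques as neighbourhoods, so they can only be
endpoints of an induced path: these `a` vertices are in monophonic position. Conversely, let `S`
be in monophonic position. If `S` contains no leg, it lies on the induced path `u₀, …, u_{n-a}`.
If it contains a leg `v`, the induced path `v, u₁, …, u_{n-a}` leaves room for at most one
vertex of `S` among `u₁, …, u_{n-a}`; and if moreover `u₀ ∈ S`, the induced paths `v, u₀, w`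
exclude every other leg `w`. Either way `|S| ≤ a`.

For the diameter, the index along the spine (legs having index `1`) changes by at most one
along an edge, so `d(u₀, u_{n-a}) ≥ n - a`, while walks along the spine join any two vertices
within `n - a` steps.
-/

namespace SimpleGraph

section General

variable {V : Type*} {G : SimpleGraph V}

def Walk.ofSeq (f : ℕ → V) : (k : ℕ) → (∀ i < k, G.Adj (f i) (f (i + 1))) → G.Walk (f 0) (f k)
  | 0, _ => .nil
  | k + 1, h => .cons (h 0 k.succ_pos) (ofSeq (fun i ↦ f (i + 1)) k fun i hi ↦ h (i + 1) (by omega))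

lemma Walk.length_ofSeq (f : ℕ → V) (k : ℕ) (h : ∀ i < k, G.Adj (f i) (f (i + 1))) :
    (ofSeq f k h).length = k := by
  induction k generalizing f with
  | zero => rfl
  | succ k ih => simp [ofSeq, ih]

lemma Walk.getVert_ofSeq (f : ℕ → V) (k : ℕ) (h : ∀ i < k, G.Adj (f i) (f (i + 1))) {i : ℕ}
    (hi : i ≤ k) : (ofSeq f k h).getVert i = f i := by
  induction k generalizing f i with
  | zero => simp [ofSeq, show i = 0 by omega]
  | succ k ih =>
    rcases i with _ | i
    · simp
    · simp only [ofSeq, getVert_cons_succ]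
      exact ih _ _ (by omega)

lemma isInducedPathW_of_getVert {u v : V} (p : G.Walk u v)
    (hinj : Set.InjOn p.getVert {i | i ≤ p.length})
    (hadj : ∀ i ≤ p.length, ∀ j ≤ p.length, G.Adj (p.getVert i) (p.getVert j) →
      j = i + 1 ∨ i = j + 1) :
    IsInducedPathW G p := by
  refine ⟨(Walk.IsPath.getVert_injOn_iff p).mp hinj, fun x y hx hy ↦
    ⟨fun hxy ↦ ?_, fun hxy ↦ hxy.adj_sub⟩⟩
  obtain ⟨i, rfl, hi⟩ := Walk.mem_support_iff_exists_getVert.mp hx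
  obtain ⟨j, rfl, hj⟩ := Walk.mem_support_iff_exists_getVert.mp hy
  rcases hadj i hi j hj hxy with rfl | rfl
  · exact p.toSubgraph_adj_getVert (by omega)
  · exact (p.toSubgraph_adj_getVert (by omega)).symm

lemma IsInducedPathW.eq_or_eq_of_isClique_neighborSet {u v c : V} {p : G.Walk u v}
    (hp : IsInducedPathW G p) (hc : c ∈ p.support) (hcl : G.IsClique (G.neighborSet c)) :
    c = u ∨ c = v := by
  obtain ⟨i, rfl, hi⟩ := Walk.mem_support_iff_exists_getVert.mp hc
  rcases Nat.eq_zero_or_pos i with rfl | hi0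
  · exact .inl p.getVert_zero
  rcases hi.eq_or_lt with rfl | hil
  · exact .inr p.getVert_length
  have hinj := hp.1.getVert_injOn
  have hprev : G.Adj (p.getVert i) (p.getVert (i - 1)) := by
    simpa [Nat.sub_add_cancel hi0] using (p.adj_getVert_succ (i := i - 1) (by omega)).symm
  have hne : p.getVert (i - 1) ≠ p.getVert (i + 1) := fun h ↦ by
    have := hinj (by simp; omega) (by simp; omega) h
    omega
  -- the two path-neighbours of `c` are adjacent, so they must be consecutive on `p`
  obtain ⟨j, hj, hjl⟩ := p.toSubgraph_adj_iff.mp <| (hp.2 _ _ (p.getVert_mem_support _)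
    (p.getVert_mem_support _)).mp (hcl hprev (p.adj_getVert_succ hil) hne)
  rcases Sym2.eq_iff.mp hj with ⟨h₁, h₂⟩ | ⟨h₁, h₂⟩ <;>
  · have := hinj (by simp; omega) (by simp; omega) h₁
    have := hinj (by simp; omega) (by simp; omega) h₂
    omega

lemma isMpSet_of_forall_isClique_neighborSet {S : Set V}
    (hS : ∀ c ∈ S, G.IsClique (G.neighborSet c)) : IsMpSet G S := by
  intro u v p hp
  have hsub : S ∩ {x | x ∈ p.support} ⊆ {u, v} := fun c ⟨hcS, hcp⟩ ↦
    hp.eq_or_eq_of_isClique_neighborSet hcp (hS c hcS)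
  calc (S ∩ {x | x ∈ p.support}).ncard ≤ ({u, v} : Set V).ncard := Set.ncard_le_ncard hsub
    _ ≤ ({v} : Set V).ncard + 1 := Set.ncard_insert_le u {v}
    _ = 2 := by rw [Set.ncard_singleton]

def OnInducedPath (G : SimpleGraph V) (T : Set V) : Prop :=
  ∃ (u v : V) (p : G.Walk u v), IsInducedPathW G p ∧ T ⊆ {x | x ∈ p.support}

lemma OnInducedPath.mono {T T' : Set V} (hT : OnInducedPath G T) (h : T' ⊆ T) :
    OnInducedPath G T' :=
  let ⟨u, v, p, hp, hTp⟩ := hT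
  ⟨u, v, p, hp, h.trans hTp⟩

lemma onInducedPath_image_Iic (f : ℕ → V) (k : ℕ) (hinj : Set.InjOn f (Set.Iic k))
    (hadj : ∀ i ≤ k, ∀ j ≤ k, G.Adj (f i) (f j) ↔ j = i + 1 ∨ i = j + 1) :
    OnInducedPath G (f '' Set.Iic k) := by
  set p := Walk.ofSeq f k fun i hi ↦ (hadj i hi.le (i + 1) hi).mpr (.inl rfl)
  have hlen : p.length = k := Walk.length_ofSeq ..
  have hget : ∀ i ≤ k, p.getVert i = f i := fun i hi ↦ Walk.getVert_ofSeq _ _ _ hi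
  refine ⟨_, _, p, isInducedPathW_of_getVert p ?_ ?_, ?_⟩
  · intro i hi j hj hij
    rw [hlen] at hi hj
    rw [hget i hi, hget j hj] at hij
    exact hinj hi hj hij
  · intro i hi j hj hij
    rw [hlen] at hi hj
    rw [hget i hi, hget j hj] at hij
    exact (hadj i hi j hj).mp hij
  · rintro _ ⟨i, hi, rfl⟩
    exact hget i hi ▸ p.getVert_mem_support i

lemma onInducedPath_triple {x y z : V} (hxy : G.Adj x y) (hyz : G.Adj y z) (hxz : ¬ G.Adj x z)
    (hne : x ≠ z) : OnInducedPath G {x, y, z} := by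
  set f : ℕ → V := fun t ↦ if t = 0 then x else if t = 1 then y else z
  refine (onInducedPath_image_Iic f 2 ?_ ?_).mono ?_
  · intro i hi j hj hij
    simp only [Set.mem_Iic] at hi hj
    interval_cases i <;> interval_cases j <;>
      simp_all [f, hxy.ne, hyz.ne, hyz.ne.symm, hxy.ne.symm]
  · intro i hi j hj
    interval_cases i <;> interval_cases j <;> simp_all [f, hxy.symm, hyz.symm, G.adj_comm z x]
  · rintro _ (rfl | rfl | rfl)
    exacts [⟨0, by simp, rfl⟩, ⟨1, by simp, rfl⟩, ⟨2, by simp, rfl⟩]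

lemma IsMpSet.ncard_inter_le_two {S T : Set V} (hS : IsMpSet G S) (hT : OnInducedPath G T) :
    (S ∩ T).ncard ≤ 2 := by
  obtain ⟨u, v, p, hp, hTp⟩ := hT
  exact (Set.ncard_le_ncard (Set.inter_subset_inter_right S hTp)
    ((List.finite_toSet _).inter_of_right S)).trans (hS p hp)

lemma mpNum_eq_of_isMpSet {S : Set V} {k : ℕ} (hS : IsMpSet G S) (hSk : S.ncard = k)
    (hle : ∀ T, IsMpSet G T → T.ncard ≤ k) : mpNum G = k :=
  IsGreatest.csSup_eq ⟨⟨S, hS, hSk⟩, fun _ ⟨T, hT, hTk⟩ ↦ hTk ▸ hle T hT⟩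

lemma Walk.le_add_length_of_forall_adj {f : V → ℕ} (hf : ∀ x y, G.Adj x y → f y ≤ f x + 1) :
    ∀ {u v : V} (p : G.Walk u v), f v ≤ f u + p.length
  | _, _, .nil => by simp
  | _, _, .cons h p => by
    have := hf _ _ h
    have := p.le_add_length_of_forall_adj hf
    simp only [length_cons]
    omega

lemma le_add_edist_of_forall_adj {f : V → ℕ} (hf : ∀ x y, G.Adj x y → f y ≤ f x + 1)
    (u v : V) : (f v : ℕ∞) ≤ f u + G.edist u v := by
  by_cases h : G.Reachable u v
  · obtain ⟨p, hp⟩ := h.exists_walk_length_eq_edist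
    rw [← hp]
    exact_mod_cast p.le_add_length_of_forall_adj hf
  · simp [edist_eq_top_of_not_reachable h]

lemma edist_le_of_forall_adj (f : ℕ → V) {i j : ℕ} (hij : i ≤ j)
    (hf : ∀ t, i ≤ t → t < j → G.Adj (f t) (f (t + 1))) :
    G.edist (f i) (f j) ≤ (j - i : ℕ) := by
  induction j, hij using Nat.le_induction with
  | base => simp
  | succ j hij ih =>
    calc G.edist (f i) (f (j + 1)) ≤ G.edist (f i) (f j) + G.edist (f j) (f (j + 1)) :=
          G.edist_triangle
      _ ≤ (j - i : ℕ) + 1 := by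
          gcongr
          · exact ih fun t h₁ h₂ ↦ hf t h₁ (by omega)
          · exact (edist_eq_one_iff_adj.mpr (hf j hij j.lt_succ_self)).le
      _ = (j + 1 - i : ℕ) := by norm_cast; omega

end General

section Flagellum

variable {n a : ℕ}

@[simp] lemma flagellumGraph_adj_inl_inl {i j : Fin (n - a + 1)} :
    (flagellumGraph n a).Adj (.inl i) (.inl j) ↔ (i : ℕ) + 1 = j ∨ (j : ℕ) + 1 = i := by
  simp only [flagellumGraph, fromRel_adj, ne_eq, Sum.inl.injEq, and_iff_right_iff_imp]
  rintro h rfl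
  omega

@[simp] lemma flagellumGraph_adj_inr_inl {v : Fin (a - 1)} {i : Fin (n - a + 1)} :
    (flagellumGraph n a).Adj (.inr v) (.inl i) ↔ (i : ℕ) = 0 ∨ (i : ℕ) = 1 := by
  simp [flagellumGraph]

@[simp] lemma flagellumGraph_adj_inl_inr {v : Fin (a - 1)} {i : Fin (n - a + 1)} :
    (flagellumGraph n a).Adj (.inl i) (.inr v) ↔ (i : ℕ) = 0 ∨ (i : ℕ) = 1 := by
  rw [adj_comm, flagellumGraph_adj_inr_inl]

@[simp] lemma flagellumGraph_not_adj_inr_inr {v w : Fin (a - 1)} :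
    ¬ (flagellumGraph n a).Adj (.inr v) (.inr w) := by
  simp [flagellumGraph]

lemma flagellumGraph_isClique_neighborSet_inr (v : Fin (a - 1)) :
    (flagellumGraph n a).IsClique ((flagellumGraph n a).neighborSet (.inr v)) := by
  rintro (i | _) hi (j | _) hj hij
  · simp only [mem_neighborSet, flagellumGraph_adj_inr_inl] at hi hj
    have : (i : ℕ) ≠ j := fun h ↦ hij (congrArg _ (Fin.ext h))
    simp only [flagellumGraph_adj_inl_inl]
    omega
  all_goals simp at hi hj

lemma flagellumGraph_isClique_neighborSet_last (hM : 2 ≤ n - a) :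
    (flagellumGraph n a).IsClique ((flagellumGraph n a).neighborSet (.inl (Fin.last _))) := by
  rintro (i | _) hi (j | _) hj hij
  · simp only [mem_neighborSet, flagellumGraph_adj_inl_inl, Fin.val_last] at hi hj
    exact absurd (congrArg _ (Fin.ext (by omega))) hij
  all_goals simp at hi hj; omega

lemma flagellumGraph_isMpSet_insert_last_range_inr (hM : 2 ≤ n - a) :
    IsMpSet (flagellumGraph n a) (insert (.inl (Fin.last _)) (Set.range .inr)) := by
  refine isMpSet_of_forall_isClique_neighborSet ?_
  rintro _ (rfl | ⟨v, rfl⟩)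
  exacts [flagellumGraph_isClique_neighborSet_last hM,
    flagellumGraph_isClique_neighborSet_inr v]

lemma flagellumGraph_onInducedPath_range_inl :
    OnInducedPath (flagellumGraph n a) (Set.range .inl) := by
  refine (onInducedPath_image_Iic (fun t ↦ .inl (Fin.clamp t (n - a))) (n - a) ?_ ?_).mono ?_
  · intro i hi j hj hij
    simp only [Set.mem_Iic, Sum.inl.injEq, Fin.ext_iff, Fin.coe_clamp] at hi hj hij
    omega
  · intro i hi j hj
    simp only [flagellumGraph_adj_inl_inl, Fin.coe_clamp]
    omega
  · rintro _ ⟨i, rfl⟩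
    exact ⟨i, i.is_le, by simp [Fin.ext_iff, i.is_le]⟩

lemma flagellumGraph_onInducedPath_leg_tail (hM : 1 ≤ n - a) (v : Fin (a - 1)) :
    OnInducedPath (flagellumGraph n a) (insert (.inr v) (.inl '' {0}ᶜ)) := by
  refine (onInducedPath_image_Iic
    (fun t ↦ if t = 0 then .inr v else .inl (Fin.clamp t (n - a))) (n - a) ?_ ?_).mono ?_
  · intro i hi j hj hij
    simp only [Set.mem_Iic] at hi hj
    rcases i with _ | i <;> rcases j with _ | j <;> simp_all [Fin.ext_iff]
  · intro i hi j hj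
    rcases i with _ | i <;> rcases j with _ | j <;> simp <;> omega
  · rintro _ (rfl | ⟨i, hi, rfl⟩)
    · exact ⟨0, by simp, rfl⟩
    · have hi0 : (i : ℕ) ≠ 0 := fun h ↦ hi (Fin.ext h)
      exact ⟨i, i.is_le, by simp [hi0, Fin.ext_iff, i.is_le]⟩

lemma flagellumGraph_onInducedPath_leg_root_leg {v w : Fin (a - 1)} (hvw : v ≠ w) :
    OnInducedPath (flagellumGraph n a) {.inr v, .inl 0, .inr w} :=
  onInducedPath_triple (by simp) (by simp) (by simp) (by simpa using hvw)

lemma ncard_le_of_isMpSet_flagellumGraph (hM : 1 ≤ n - a) (ha : 3 ≤ a)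
    {S : Set (Fin (n - a + 1) ⊕ Fin (a - 1))} (hS : IsMpSet (flagellumGraph n a) S) :
    S.ncard ≤ a := by
  by_cases hleg : ∃ v, .inr v ∈ S
  swap
  · simp only [not_exists] at hleg
    have hSinl : S ⊆ S ∩ Set.range .inl := by
      rintro (i | v) hx
      exacts [⟨hx, i, rfl⟩, absurd hx (hleg v)]
    have := hS.ncard_inter_le_two flagellumGraph_onInducedPath_range_inl
    have := Set.ncard_le_ncard hSinl
    omega
  obtain ⟨v, hv⟩ := hleg
  have htail := hS.ncard_inter_le_two (flagellumGraph_onInducedPath_leg_tail hM v)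
  set tail : Set (Fin (n - a + 1) ⊕ Fin (a - 1)) := insert (.inr v) (.inl '' {0}ᶜ)
  by_cases hroot : .inl 0 ∈ S
  · have hS' : S ⊆ {.inl 0} ∪ (S ∩ tail) := by
      rintro (i | w) hx
      · by_cases hi : i = 0
        exacts [.inl (hi ▸ rfl), .inr ⟨hx, .inr ⟨i, hi, rfl⟩⟩]
      · by_cases hw : w = v
        · exact .inr ⟨hx, .inl (hw ▸ rfl)⟩
        have h3 :=
          hS.ncard_inter_le_two (flagellumGraph_onInducedPath_leg_root_leg (Ne.symm hw))
        rw [Set.inter_eq_right.mpr (by simp [Set.insert_subset_iff, hv, hx, hroot]),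
          Set.ncard_eq_three.mpr ⟨_, _, _, by simp, by simpa using Ne.symm hw, by simp, rfl⟩] at h3
        omega
    have := (Set.ncard_le_ncard hS').trans (Set.ncard_union_le _ _)
    rw [Set.ncard_singleton] at this
    omega
  · have hS' : S ⊆ (Set.range .inr \ {.inr v}) ∪ (S ∩ tail) := by
      rintro (i | w) hx
      · have hi : i ≠ 0 := by rintro rfl; exact hroot hx
        exact .inr ⟨hx, .inr ⟨i, hi, rfl⟩⟩
      · by_cases hw : w = v
        exacts [.inr ⟨hx, .inl (hw ▸ rfl)⟩, .inl ⟨⟨w, rfl⟩, by simpa using hw⟩]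
    have hlegs : (Set.range .inr \ {.inr v} : Set (Fin (n - a + 1) ⊕ Fin (a - 1))).ncard
        = a - 1 - 1 := by
      rw [Set.ncard_sdiff_singleton_of_mem (Set.mem_range_self v),
        Set.ncard_range_of_injective Sum.inr_injective, Nat.card_fin]
    have := (Set.ncard_le_ncard hS').trans (Set.ncard_union_le _ _)
    omega

theorem mpNum_flagellumGraph (hM : 2 ≤ n - a) (ha : 3 ≤ a) :
    mpNum (flagellumGraph n a) = a := by
  refine mpNum_eq_of_isMpSet (flagellumGraph_isMpSet_insert_last_range_inr hM) ?_
    fun _ ↦ ncard_le_of_isMpSet_flagellumGraph (by omega) ha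
  rw [Set.ncard_insert_of_notMem (by simp), Set.ncard_range_of_injective Sum.inr_injective,
    Nat.card_fin]
  omega

lemma flagellumGraph_edist_inl_inl_le {i j : Fin (n - a + 1)} (hij : (i : ℕ) ≤ j) :
    (flagellumGraph n a).edist (.inl i) (.inl j) ≤ (j - i : ℕ) := by
  have hclamp : ∀ k : Fin (n - a + 1), Fin.clamp k (n - a) = k :=
    fun k ↦ Fin.ext (by simp [k.is_le])
  simpa only [hclamp] using edist_le_of_forall_adj (G := flagellumGraph n a)
    (fun t ↦ .inl (Fin.clamp t (n - a))) hij fun t _ ht ↦ by simp; omega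

lemma flagellumGraph_edist_inr_inl_le (hM : 1 ≤ n - a) (v : Fin (a - 1)) (j : Fin (n - a + 1)) :
    (flagellumGraph n a).edist (.inr v) (.inl j) ≤ (n - a : ℕ) := by
  rcases Nat.eq_zero_or_pos j with hj | hj
  · rw [edist_eq_one_iff_adj.mpr (by simp [hj])]
    exact_mod_cast hM
  have hclamp : Fin.clamp j (n - a) = j := Fin.ext (by simp [j.is_le])
  have := edist_le_of_forall_adj (G := flagellumGraph n a)
    (fun t ↦ if t = 0 then .inr v else .inl (Fin.clamp t (n - a))) (Nat.zero_le j)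
    fun t _ ht ↦ by rcases t with _ | t <;> simp <;> omega
  simp only [if_pos, hj.ne', if_false, hclamp] at this
  exact this.trans (by exact_mod_cast (by omega))

lemma flagellumGraph_edist_le (hM : 2 ≤ n - a) (x y : Fin (n - a + 1) ⊕ Fin (a - 1)) :
    (flagellumGraph n a).edist x y ≤ (n - a : ℕ) := by
  rcases x with i | v <;> rcases y with j | w
  · rcases le_total (i : ℕ) j with hij | hji
    · exact (flagellumGraph_edist_inl_inl_le hij).trans (by exact_mod_cast (by omega))
    · rw [edist_comm]
      exact (flagellumGraph_edist_inl_inl_le hji).trans (by exact_mod_cast (by omega))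
  · rw [edist_comm]
    exact flagellumGraph_edist_inr_inl_le (by omega) w i
  · exact flagellumGraph_edist_inr_inl_le (by omega) v j
  · calc (flagellumGraph n a).edist (.inr v) (.inr w)
        ≤ (flagellumGraph n a).edist (.inr v) (.inl 0) +
          (flagellumGraph n a).edist (.inl 0) (.inr w) := (flagellumGraph n a).edist_triangle
      _ = 2 := by rw [edist_eq_one_iff_adj.mpr (by simp), edist_eq_one_iff_adj.mpr (by simp)]; rfl
      _ ≤ (n - a : ℕ) := by exact_mod_cast hM

lemma flagellumGraph_le_edist_inl_zero_last :
    ((n - a : ℕ) : ℕ∞) ≤ (flagellumGraph n a).edist (.inl 0) (.inl (Fin.last _)) := by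
  have h := le_add_edist_of_forall_adj (G := flagellumGraph n a)
    (f := Sum.elim (fun i ↦ (i : ℕ)) fun _ ↦ 1)
    (by
      rintro (i | _) (j | _) hij <;>
        simp only [flagellumGraph_adj_inl_inl, flagellumGraph_adj_inr_inl,
          flagellumGraph_adj_inl_inr, flagellumGraph_not_adj_inr_inr, Sum.elim_inl,
          Sum.elim_inr] at hij ⊢ <;>
        omega)
    (.inl 0) (.inl (Fin.last _))
  simpa only [Sum.elim_inl, Fin.val_last, Fin.val_zero, Nat.cast_zero, zero_add] using h

theorem diam_flagellumGraph (hM : 2 ≤ n - a) : (flagellumGraph n a).diam = n - a := by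
  have hediam : (flagellumGraph n a).ediam = (n - a : ℕ) :=
    le_antisymm (ediam_le_of_edist_le (flagellumGraph_edist_le hM))
      (flagellumGraph_le_edist_inl_zero_last.trans edist_le_ediam)
  rw [diam, hediam, ENat.toNat_natCast]

end Flagellum

end SimpleGraph

theorem flagellum_props (n a : ℕ) (ha : 3 ≤ a) (han : a ≤ n - 2) :
    Fintype.card (Fin (n - a + 1) ⊕ Fin (a - 1)) = n ∧
    mpNum (flagellumGraph n a) = a ∧ (flagellumGraph n a).diam = n - a := by
  refine ⟨?_, mpNum_flagellumGraph (by omega) ha, diam_flagellumGraph (by omega)⟩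
  rw [Fintype.card_sum, Fintype.card_fin, Fintype.card_fin]
  omega
end

section
/- If G is a connected graph of order n with monophonic position number 2 and diameter D satisfying 3 ≤ D < n − 1, then D ≤ ⌊n/2⌋. -/
open SimpleGraph

namespace MpAux
variable {V : Type*} {G : SimpleGraph V}

lemma start_unique {u v x y : V} (p : G.Walk u v) (hp : p.IsPath)
    (hx : p.toSubgraph.Adj u x) (hy : p.toSubgraph.Adj u y) : x = y := by
  cases p with
  | nil => simp [Walk.toSubgraph] at hx
  | @cons _ u' _ h q =>
    rw [Walk.cons_isPath_iff] at hp
    have hmem : ∀ z, q.toSubgraph.Adj u z → False := by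
      intro z hz
      exact hp.2 ((Walk.mem_verts_toSubgraph q).mp hz.fst_mem)
    have key : ∀ z, (Walk.cons h q).toSubgraph.Adj u z → z = u' := by
      intro z hz
      rcases (Subgraph.sup_adj).mp hz with h1 | h1
      · simp only [subgraphOfAdj_adj, Sym2.eq_iff] at h1
        rcases h1 with ⟨-, rfl⟩ | ⟨rfl, hz2⟩
        · rfl
        · exact hz2.symm
      · exact absurd h1 (hmem z)
    rw [key x hx, key y hy]

lemma path_three_nbrs {u v : V} (p : G.Walk u v) (hp : p.IsPath) {w a b c : V}
    (hab : a ≠ b) (hac : a ≠ c) (hbc : b ≠ c)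
    (ha : p.toSubgraph.Adj w a) (hb : p.toSubgraph.Adj w b)
    (hc : p.toSubgraph.Adj w c) : False := by
  induction p with
  | nil => simp [Walk.toSubgraph] at ha
  | @cons u u' v h q ih =>
    by_cases hw : w = u
    · subst hw; exact hab (start_unique _ hp ha hb)
    · have split : ∀ x : V, (Walk.cons h q).toSubgraph.Adj w x →
          (w = u' ∧ x = u) ∨ q.toSubgraph.Adj w x := by
        intro x hx
        rcases (Subgraph.sup_adj).mp hx with h1 | h1
        · simp only [subgraphOfAdj_adj, Sym2.eq_iff] at h1
          rcases h1 with ⟨huw, -⟩ | ⟨hux, huw⟩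
          · exact absurd huw.symm hw
          · exact Or.inl ⟨huw.symm, hux.symm⟩
        · exact Or.inr h1
      have hq : q.IsPath := hp.of_cons
      rcases split a ha with ⟨hwa, hau⟩ | ha'
      · rcases split b hb with ⟨hwb, hbu⟩ | hb'
        · exact hab (hau.trans hbu.symm)
        · rcases split c hc with ⟨hwc, hcu⟩ | hc'
          · exact hac (hau.trans hcu.symm)
          · subst hwa; exact hbc (start_unique q hq hb' hc')
      · rcases split b hb with ⟨hwb, hbu⟩ | hb'
        · rcases split c hc with ⟨hwc, hcu⟩ | hc'
          · exact hbc (hbu.trans hcu.symm)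
          · subst hwb; exact hac (start_unique q hq ha' hc')
        · rcases split c hc with ⟨hwc, hcu⟩ | hc'
          · subst hwc; exact hab (start_unique q hq ha' hb')
          · exact ih hq ha' hb' hc'

lemma dist_adj (hconn : G.Connected) {r x y : V} (h : G.Adj x y) :
    G.dist r y ≤ G.dist r x + 1 := by
  calc G.dist r y ≤ G.dist r x + G.dist x y := hconn.dist_triangle
  _ = G.dist r x + 1 := by rw [dist_eq_one_iff_adj.mpr h]

lemma exists_pred (hconn : G.Connected) {r x : V} {j : ℕ} (h : G.dist r x = j + 1) :
    ∃ y, G.Adj y x ∧ G.dist r y = j := by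
  obtain ⟨p, hp⟩ := hconn.exists_walk_length_eq_dist r x
  have hne : x ≠ r := by
    rintro rfl
    rw [dist_self] at h
    omega
  obtain ⟨y, hadj, q, hq⟩ := Walk.exists_eq_cons_of_ne hne p.reverse
  have hql : q.length = j := by
    have := congrArg Walk.length hq
    rw [Walk.length_reverse, Walk.length_cons, hp, h] at this
    omega
  refine ⟨y, hadj.symm, ?_⟩
  have h1 : G.dist r y ≤ j := by
    have := dist_le q.reverse
    rwa [Walk.length_reverse, hql] at this
  have h2 : G.dist r x ≤ G.dist r y + 1 := dist_adj hconn hadj.symm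
  omega

lemma exists_at_dist (hconn : G.Connected) {r : V} :
    ∀ (k : ℕ) (s : V), G.dist r s = k → ∀ j ≤ k, ∃ z, G.dist r z = j := by
  intro k
  induction k with
  | zero => intro s hs j hj; exact ⟨s, by omega⟩
  | succ m ih =>
    intro s hs j hj
    rcases Nat.eq_or_lt_of_le hj with rfl | hlt
    · exact ⟨s, hs⟩
    · obtain ⟨y, -, hy⟩ := exists_pred hconn hs
      exact ih y hy j (by omega)

lemma crossing (hconn : G.Connected) {r : V} {i : ℕ} :
    ∀ {x y : V} (p : G.Walk x y), G.dist r x ≤ i → i ≤ G.dist r y →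
      ∃ z ∈ p.support, G.dist r z = i := by
  intro x y p
  induction p with
  | nil => intro h1 h2; exact ⟨_, by simp, le_antisymm h1 h2⟩
  | @cons x x' y h q ih =>
    intro h1 h2
    by_cases hx : G.dist r x = i
    · exact ⟨x, by simp, hx⟩
    · have hlt : G.dist r x < i := lt_of_le_of_ne h1 hx
      have hx' : G.dist r x' ≤ i := le_trans (dist_adj hconn h) (by omega)
      obtain ⟨z, hz, hz'⟩ := ih hx' h2
      exact ⟨z, by simp [hz], hz'⟩

lemma extract {u v a b : V} (p : G.Walk u v) (ha : a ∈ p.support) (hb : b ∈ p.support) :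
    ∃ q : G.Walk a b, ∀ z ∈ q.support, z ∈ p.support := by
  classical
  by_cases hab : a ∈ (p.takeUntil b hb).support
  · refine ⟨(p.takeUntil b hb).dropUntil a hab, fun z hz => ?_⟩
    exact p.support_takeUntil_subset hb ((p.takeUntil b hb).support_dropUntil_subset hab hz)
  · have ha' : a ∈ (p.dropUntil b hb).support := by
      have := p.take_spec hb
      rw [← this, Walk.mem_support_append_iff] at ha
      tauto
    refine ⟨((p.dropUntil b hb).takeUntil a ha').reverse, fun z hz => ?_⟩
    rw [Walk.support_reverse, List.mem_reverse] at hz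
    exact p.support_dropUntil_subset hb ((p.dropUntil b hb).support_takeUntil_subset ha' hz)

lemma pair_bound {s : Set V} {x y : V} (h : s ⊆ {x, y}) : s.ncard ≤ 2 := by
  have : s.ncard ≤ ({x, y} : Set V).ncard :=
    Set.ncard_le_ncard h ((Set.finite_singleton y).insert x)
  have h2 : ({x, y} : Set V).ncard ≤ 2 := by
    have := Set.ncard_insert_le x ({y} : Set V)
    simpa [Set.ncard_singleton] using this
  omega

lemma mp_three {w a b c : V} (hwa : G.Adj w a) (hwb : G.Adj w b) (hwc : G.Adj w c)
    (hab : a ≠ b) (hac : a ≠ c) (hbc : b ≠ c)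
    (hsep : ∀ p : G.Walk a b, w ∈ p.support) :
    IsMpSet G {a, b, c} ∧ ({a, b, c} : Set V).ncard = 3 := by
  constructor
  · intro u' v' p hp
    by_cases hall : a ∈ p.support ∧ b ∈ p.support ∧ c ∈ p.support
    · exfalso
      obtain ⟨ha, hb, hc⟩ := hall
      obtain ⟨q, hq⟩ := extract p ha hb
      have hwp : w ∈ p.support := hq w (hsep q)
      exact path_three_nbrs p hp.1 hab hac hbc
        ((hp.2 w a hwp ha).mp hwa) ((hp.2 w b hwp hb).mp hwb) ((hp.2 w c hwp hc).mp hwc)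
    · push_neg at hall
      by_cases ha : a ∈ p.support
      · by_cases hb : b ∈ p.support
        · have hc := hall ha hb
          refine pair_bound (x := a) (y := b) ?_
          rintro z ⟨hz1, hz2⟩
          simp only [Set.mem_insert_iff, Set.mem_singleton_iff] at hz1 ⊢
          rcases hz1 with rfl | rfl | rfl
          · exact Or.inl rfl
          · exact Or.inr rfl
          · exact absurd hz2 hc
        · refine pair_bound (x := a) (y := c) ?_
          rintro z ⟨hz1, hz2⟩
          simp only [Set.mem_insert_iff, Set.mem_singleton_iff] at hz1 ⊢
          rcases hz1 with rfl | rfl | rfl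
          · exact Or.inl rfl
          · exact absurd hz2 hb
          · exact Or.inr rfl
      · refine pair_bound (x := b) (y := c) ?_
        rintro z ⟨hz1, hz2⟩
        simp only [Set.mem_insert_iff, Set.mem_singleton_iff] at hz1 ⊢
        rcases hz1 with rfl | rfl | rfl
        · exact absurd hz2 ha
        · exact Or.inl rfl
        · exact Or.inr rfl
  · exact Set.ncard_eq_three.mpr ⟨a, b, c, hab, hac, hbc, rfl⟩

lemma mpNum_ge [Fintype V] {S : Set V} (hS : IsMpSet G S) : S.ncard ≤ mpNum G := by
  apply le_csSup
  · refine ⟨Fintype.card V, ?_⟩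
    rintro n ⟨T, -, rfl⟩
    have := Set.ncard_le_ncard (Set.subset_univ T) Set.finite_univ
    simpa [Set.ncard_univ, Nat.card_eq_fintype_card] using this
  · exact ⟨S, hS, rfl⟩

lemma stepD (hconn : G.Connected)
    (NC : ∀ w x y z : V, G.Adj w x → G.Adj w y → G.Adj w z → x ≠ y → x ≠ z → y ≠ z →
        ¬ (∀ p : G.Walk x y, w ∈ p.support))
    {r s : V} {D : ℕ} (hrs : G.dist r s = D) {k : ℕ} {c : V}
    (hk1 : 1 ≤ k) (hkD : k + 1 ≤ D) (hc : {x | G.dist r x = k} = {c}) :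
    ∃ d, {x | G.dist r x = k + 1} = {d} := by
  have hmemc : ∀ x : V, G.dist r x = k ↔ x = c := fun x => Set.ext_iff.mp hc x
  have hdc : G.dist r c = k := (hmemc c).mpr rfl
  obtain ⟨a, hac, hda⟩ := exists_pred hconn (show G.dist r c = (k - 1) + 1 by omega)
  obtain ⟨b, hdb⟩ := exists_at_dist hconn D s hrs (k + 1) hkD
  obtain ⟨y, hyb, hdy⟩ := exists_pred hconn hdb
  have hyb2 : G.Adj c b := ((hmemc y).mp hdy) ▸ hyb
  have hkey : ∀ x : V, G.dist r x = k + 1 → x = b := by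
    intro x hdx
    by_contra hxb
    obtain ⟨y', hy'x, hdy'⟩ := exists_pred hconn hdx
    have hy'c : G.Adj c x := ((hmemc y').mp hdy') ▸ hy'x
    refine NC c a b x hac.symm hyb2 hy'c ?_ ?_ ?_ ?_
    · intro hh; rw [hh] at hda; omega
    · intro hh; rw [hh] at hda; omega
    · intro hh; exact hxb hh.symm
    · intro p
      obtain ⟨z, hz, hdz⟩ := crossing hconn (r := r) (i := k) p (by omega) (by omega)
      rwa [(hmemc z).mp hdz] at hz
  refine ⟨b, Set.ext fun x => ⟨fun hx => hkey x hx, fun hx => ?_⟩⟩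
  rw [Set.mem_singleton_iff] at hx
  subst hx
  exact hdb

lemma stepD_iter (hconn : G.Connected)
    (NC : ∀ w x y z : V, G.Adj w x → G.Adj w y → G.Adj w z → x ≠ y → x ≠ z → y ≠ z →
        ¬ (∀ p : G.Walk x y, w ∈ p.support))
    {r s : V} {D : ℕ} (hrs : G.dist r s = D) :
    ∀ (m : ℕ) {k : ℕ} {c : V}, 1 ≤ k → k + m ≤ D → ({x | G.dist r x = k} = {c}) →
      ∃ d, {x | G.dist r x = k + m} = {d} := by
  intro m
  induction m with
  | zero => intro k c h1 h2 hc; exact ⟨c, hc⟩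
  | succ j ih =>
    intro k c h1 h2 hc
    obtain ⟨d, hd⟩ := ih h1 (by omega) hc
    have := stepD hconn NC hrs (k := k + j) (c := d) (by omega) (by omega) hd
    simpa [Nat.add_assoc] using this

end MpAux

theorem mp_two_diam_bound {V : Type*} [Fintype V] (G : SimpleGraph V)
    (hconn : G.Connected) (hmp : mpNum G = 2) (hD : 3 ≤ G.diam)
    (hD' : G.diam < Fintype.card V - 1) :
    G.diam ≤ Fintype.card V / 2 := by
  classical
  by_contra hcon
  push_neg at hcon
  set D := G.diam with hDdef
  set n := Fintype.card V with hndef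
  have hDne : G.diam ≠ 0 := by omega
  have hnt : Nontrivial V := nontrivial_of_diam_ne_zero hDne
  have hle : ∀ x y : V, G.dist x y ≤ D :=
    fun x y => dist_le_diam (ediam_ne_top_of_diam_ne_zero hDne)
  obtain ⟨u, v, huv⟩ := exists_dist_eq_diam (G := G)
  by_cases hNCe : ∃ w x y z : V, G.Adj w x ∧ G.Adj w y ∧ G.Adj w z ∧ x ≠ y ∧ x ≠ z ∧ y ≠ z ∧
      ∀ p : G.Walk x y, w ∈ p.support
  · obtain ⟨w, x, y, z, h1, h2, h3, h4, h5, h6, h7⟩ := hNCe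
    obtain ⟨hmpS, hcard⟩ := MpAux.mp_three h1 h2 h3 h4 h5 h6 h7
    have := MpAux.mpNum_ge hmpS
    rw [hcard, hmp] at this
    omega
  · have NC : ∀ w x y z : V, G.Adj w x → G.Adj w y → G.Adj w z → x ≠ y → x ≠ z → y ≠ z →
        ¬ (∀ p : G.Walk x y, w ∈ p.support) :=
      fun w x y z a b c d e f hh => hNCe ⟨w, x, y, z, a, b, c, d, e, f, hh⟩
    -- levels from u
    by_cases hsing : ∃ i c, 1 ≤ i ∧ i ≤ D - 1 ∧ {x | G.dist u x = i} = {c}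
    · obtain ⟨i, c, hi1, hi2, hset⟩ := hsing
      -- propagate to level D-1 and D
      obtain ⟨c1, hc1⟩ := MpAux.stepD_iter hconn NC huv (D - 1 - i) hi1 (by omega) hset
      rw [show i + (D - 1 - i) = D - 1 by omega] at hc1
      obtain ⟨cD, hcD⟩ := MpAux.stepD_iter hconn NC huv (D - i) hi1 (by omega) hset
      rw [show i + (D - i) = D by omega] at hcD
      have hcDv : cD = v := by
        have : v ∈ ({cD} : Set V) := hcD ▸ (show v ∈ {x | G.dist u x = D} from huv)
        exact (Set.mem_singleton_iff.mp this).symm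
      rw [hcDv] at hcD
      -- v-level 1 is {c1}
      have hadjc1 : G.Adj c1 v := by
        obtain ⟨y, hyv, hdy⟩ := MpAux.exists_pred hconn
          (show G.dist u v = (D - 1) + 1 by omega)
        have : y ∈ ({c1} : Set V) := hc1 ▸ (show y ∈ {x | G.dist u x = D - 1} from hdy)
        rw [Set.mem_singleton_iff] at this
        exact this ▸ hyv
      have hvl1 : {x | G.dist v x = 1} = {c1} := by
        ext x
        simp only [Set.mem_setOf_eq, Set.mem_singleton_iff]
        constructor
        · intro hx
          have hadj : G.Adj v x := dist_eq_one_iff_adj.mp hx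
          have hge : D ≤ G.dist u x + 1 := by
            have := MpAux.dist_adj hconn (r := u) hadj.symm
            omega
          have hlex : G.dist u x ≤ D := hle u x
          rcases Nat.eq_or_lt_of_le hlex with hexact | hlt
          · exfalso
            have hxv : x ∈ ({v} : Set V) := hcD ▸ (show x ∈ {x | G.dist u x = D} from hexact)
            rw [Set.mem_singleton_iff] at hxv
            subst hxv
            exact G.irrefl hadj
          · have : G.dist u x = D - 1 := by omega
            have hx1 : x ∈ ({c1} : Set V) :=
              hc1 ▸ (show x ∈ {x | G.dist u x = D - 1} from this)
            exact Set.mem_singleton_iff.mp hx1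
        · rintro rfl
          exact dist_eq_one_iff_adj.mpr hadjc1.symm
      -- propagate from v
      have hvu : G.dist v u = D := by rw [SimpleGraph.dist_comm]; exact huv
      have hsingv : ∀ j, 1 ≤ j → j ≤ D → ∃ d, {x | G.dist v x = j} = {d} := by
        intro j h1 h2
        obtain ⟨d, hd⟩ := MpAux.stepD_iter hconn NC hvu (j - 1) le_rfl (by omega) hvl1
        rw [show 1 + (j - 1) = j by omega] at hd
        exact ⟨d, hd⟩
      -- counting
      set L : ℕ → Finset V := fun j => Finset.univ.filter (fun x => G.dist v x = j) with hL
      have hLcard : ∀ j ≤ D, (L j).card ≤ 1 := by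
        intro j hj
        rcases Nat.eq_zero_or_pos j with rfl | hj1
        · apply Finset.card_le_one.mpr
          intro x hx y hy
          simp only [hL, Finset.mem_filter] at hx hy
          have hx0 : x = v := by
            have := hconn.dist_eq_zero_iff (u := v) (v := x) |>.mp hx.2
            exact this.symm
          have hy0 : y = v := by
            have := hconn.dist_eq_zero_iff (u := v) (v := y) |>.mp hy.2
            exact this.symm
          rw [hx0, hy0]
        · obtain ⟨d, hd⟩ := hsingv j hj1 hj
          apply Finset.card_le_one.mpr
          intro x hx y hy
          simp only [hL, Finset.mem_filter] at hx hy
          have hx' : x ∈ ({d} : Set V) := hd ▸ (show x ∈ {z | G.dist v z = j} from hx.2)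
          have hy' : y ∈ ({d} : Set V) := hd ▸ (show y ∈ {z | G.dist v z = j} from hy.2)
          rw [Set.mem_singleton_iff] at hx' hy'
          rw [hx', hy']
      have hcover : (Finset.univ : Finset V) ⊆ (Finset.range (D + 1)).biUnion L := by
        intro x _
        rw [Finset.mem_biUnion]
        exact ⟨G.dist v x, Finset.mem_range.mpr (by have := hle v x; omega),
          by simp [hL]⟩
      have hn1 : n ≤ D + 1 := by
        calc n = (Finset.univ : Finset V).card := rfl
        _ ≤ ((Finset.range (D + 1)).biUnion L).card := Finset.card_le_card hcover
        _ ≤ ∑ j ∈ Finset.range (D + 1), (L j).card := Finset.card_biUnion_le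
        _ ≤ ∑ j ∈ Finset.range (D + 1), 1 :=
            Finset.sum_le_sum (fun j hj => hLcard j (by
              have := Finset.mem_range.mp hj; omega))
        _ = D + 1 := by simp
      omega
    · -- no singleton internal level from u : counting contradiction
      set L : ℕ → Finset V := fun j => Finset.univ.filter (fun x => G.dist u x = j) with hL
      have hdisj : ∀ i ∈ Finset.range (D + 1), ∀ j ∈ Finset.range (D + 1), i ≠ j →
          Disjoint (L i) (L j) := by
        intro i _ j _ hij
        rw [Finset.disjoint_left]
        intro x hx hy
        simp only [hL, Finset.mem_filter] at hx hy
        exact hij (hx.2 ▸ hy.2 ▸ rfl)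
      have hsum : ∑ j ∈ Finset.range (D + 1), (L j).card ≤ n := by
        rw [← Finset.card_biUnion hdisj]
        exact Finset.card_le_univ _
      have hone : ∀ j ≤ D, 1 ≤ (L j).card := by
        intro j hj
        obtain ⟨z, hz⟩ := MpAux.exists_at_dist hconn D v huv j hj
        exact Finset.card_pos.mpr ⟨z, by simp [hL, hz]⟩
      have htwo : ∀ j ∈ Finset.Ico 1 D, 2 ≤ (L j).card := by
        intro j hj
        rw [Finset.mem_Ico] at hj
        have h1 := hone j (by omega)
        have hne1 : (L j).card ≠ 1 := by
          intro h1'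
          obtain ⟨d, hd⟩ := Finset.card_eq_one.mp h1'
          refine hsing ⟨j, d, by omega, by omega, ?_⟩
          ext x
          simp only [Set.mem_setOf_eq, Set.mem_singleton_iff]
          constructor
          · intro hx
            have hx' : x ∈ L j := by simp [hL, hx]
            rw [hd, Finset.mem_singleton] at hx'
            exact hx'
          · intro hx
            rw [hx]
            have hdj : d ∈ L j := hd ▸ Finset.mem_singleton_self d
            simp only [hL, Finset.mem_filter] at hdj
            exact hdj.2
        omega
      have hdecomp : Finset.range (D + 1) = insert 0 (insert D (Finset.Ico 1 D)) := by
        ext j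
        simp only [Finset.mem_range, Finset.mem_insert, Finset.mem_Ico]
        omega
      rw [hdecomp, Finset.sum_insert (by simp only [Finset.mem_insert, Finset.mem_Ico]; omega),
        Finset.sum_insert (by simp only [Finset.mem_Ico]; omega)] at hsum
      have hIco : 2 * (D - 1) ≤ ∑ j ∈ Finset.Ico 1 D, (L j).card := by
        calc 2 * (D - 1) = ∑ _j ∈ Finset.Ico 1 D, 2 := by
              rw [Finset.sum_const, Nat.card_Ico, smul_eq_mul]
              omega
        _ ≤ _ := Finset.sum_le_sum htwo
      have h0 := hone 0 (by omega)
      have hDD := hone D le_rfl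
      omega
end

section
/- If w is a cut-vertex of a connected graph G with degree at least 3, then mp(G) ≥ 3. More precisely, any set of three neighbours of w not all lying in the same component of G − w is in monophonic position. -/
open SimpleGraph

private lemma darts_inj_fst {V : Type*} {G : SimpleGraph V} {u v : V} {p : G.Walk u v}
    (hp : p.IsPath) : ∀ d ∈ p.darts, ∀ e ∈ p.darts, d.fst = e.fst → d = e := by
  have h : (p.darts.map (·.fst)).Nodup := by
    rw [p.map_fst_darts]
    exact (List.dropLast_sublist _).nodup hp.support_nodup
  exact fun d hd e he => List.inj_on_of_nodup_map h hd he

private lemma darts_inj_snd {V : Type*} {G : SimpleGraph V} {u v : V} {p : G.Walk u v}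
    (hp : p.IsPath) : ∀ d ∈ p.darts, ∀ e ∈ p.darts, d.snd = e.snd → d = e := by
  have h : (p.darts.map (·.snd)).Nodup := by
    rw [p.map_snd_darts]
    exact (List.tail_sublist _).nodup hp.support_nodup
  exact fun d hd e he => List.inj_on_of_nodup_map h hd he

private lemma key_mp {V : Type*} {G : SimpleGraph V} {w a b c : V}
    (ha : G.Adj w a) (hb : G.Adj w b) (hc : G.Adj w c)
    (hab : a ≠ b) (hac : a ≠ c) (hbc : b ≠ c)
    (hcond : ¬((∃ p : G.Walk a b, w ∉ p.support) ∧ (∃ q : G.Walk a c, w ∉ q.support))) :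
    IsMpSet G {a, b, c} := by
  classical
  intro u v p hp
  obtain ⟨hpath, hind⟩ := hp
  have hkey : ¬(a ∈ p.support ∧ b ∈ p.support ∧ c ∈ p.support) := by
    rintro ⟨haS, hbS, hcS⟩
    by_cases hw : w ∈ p.support
    · have dart_of : ∀ x : V, G.Adj w x → x ∈ p.support →
          ∃ d ∈ p.darts, (d.fst = w ∧ d.snd = x) ∨ (d.fst = x ∧ d.snd = w) := by
        intro x hx hxs
        have hadj : p.toSubgraph.Adj w x := (hind w x hw hxs).mp hx
        have he : s(w, x) ∈ p.edges :=
          (p.mem_edges_toSubgraph).mp (Subgraph.mem_edgeSet.mpr hadj)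
        rw [Walk.edges, List.mem_map] at he
        obtain ⟨d, hd, hde⟩ := he
        refine ⟨d, hd, ?_⟩
        have : s(d.fst, d.snd) = s(w, x) := hde
        rw [Sym2.eq_iff] at this
        tauto
      obtain ⟨da, hda, hda'⟩ := dart_of a ha haS
      obtain ⟨db, hdb, hdb'⟩ := dart_of b hb hbS
      obtain ⟨dc, hdc, hdc'⟩ := dart_of c hc hcS
      have clashF : ∀ (d e : G.Dart) (x y : V), d ∈ p.darts → e ∈ p.darts →
          d.fst = w ∧ d.snd = x → e.fst = w ∧ e.snd = y → x = y := by
        rintro d e x y hd he ⟨h1, h2⟩ ⟨h3, h4⟩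
        rw [← h2, ← h4]
        exact congrArg (fun d : G.Dart => d.snd) (darts_inj_fst hpath d hd e he (h1.trans h3.symm))
      have clashS : ∀ (d e : G.Dart) (x y : V), d ∈ p.darts → e ∈ p.darts →
          d.fst = x ∧ d.snd = w → e.fst = y ∧ e.snd = w → x = y := by
        rintro d e x y hd he ⟨h1, h2⟩ ⟨h3, h4⟩
        rw [← h1, ← h3]
        exact congrArg (fun d : G.Dart => d.fst) (darts_inj_snd hpath d hd e he (h2.trans h4.symm))
      rcases hda' with hA | hA <;> rcases hdb' with hB | hB <;> rcases hdc' with hC | hC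
      · exact hab (clashF da db a b hda hdb hA hB)
      · exact hab (clashF da db a b hda hdb hA hB)
      · exact hac (clashF da dc a c hda hdc hA hC)
      · exact hbc (clashS db dc b c hdb hdc hB hC)
      · exact hbc (clashF db dc b c hdb hdc hB hC)
      · exact hac (clashS da dc a c hda hdc hA hC)
      · exact hab (clashS da db a b hda hdb hA hB)
      · exact hab (clashS da db a b hda hdb hA hB)
    · have mk : ∀ x y : V, x ∈ p.support → y ∈ p.support →
          ∃ q : G.Walk x y, w ∉ q.support := by
        intro x y hx hy
        refine ⟨(p.takeUntil x hx).reverse.append (p.takeUntil y hy), ?_⟩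
        rw [Walk.mem_support_append_iff, Walk.support_reverse]
        rintro (h | h)
        · exact hw (p.support_takeUntil_subset hx (List.mem_reverse.mp h))
        · exact hw (p.support_takeUntil_subset hy h)
      exact hcond ⟨mk a b haS hbS, mk a c haS hcS⟩
  have hb2 : ∀ x y : V, ({x, y} : Set V).ncard ≤ 2 := by
    intro x y
    have := Set.ncard_insert_le x ({y} : Set V)
    simpa using this
  by_cases haS : a ∈ p.support
  · by_cases hbS : b ∈ p.support
    · have hcS : c ∉ p.support := fun h => hkey ⟨haS, hbS, h⟩
      refine le_trans (Set.ncard_le_ncard ?_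
        ((Set.finite_singleton _).insert _)) (hb2 a b)
      rintro x ⟨hx1, hx2⟩
      rcases hx1 with rfl | rfl | rfl
      · exact Set.mem_insert _ _
      · exact Set.mem_insert_of_mem _ rfl
      · exact absurd hx2 hcS
    · refine le_trans (Set.ncard_le_ncard ?_
        ((Set.finite_singleton _).insert _)) (hb2 a c)
      rintro x ⟨hx1, hx2⟩
      rcases hx1 with rfl | rfl | rfl
      · exact Set.mem_insert _ _
      · exact absurd hx2 hbS
      · exact Set.mem_insert_of_mem _ rfl
  · refine le_trans (Set.ncard_le_ncard ?_
      ((Set.finite_singleton _).insert _)) (hb2 b c)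
    rintro x ⟨hx1, hx2⟩
    rcases hx1 with rfl | rfl | rfl
    · exact absurd hx2 haS
    · exact Set.mem_insert _ _
    · exact Set.mem_insert_of_mem _ rfl

theorem cutVertex_mpNum {V : Type*} [Fintype V] (G : SimpleGraph V)
    (hconn : G.Connected) (w : V)
    (hcut : ∃ u v : V, u ≠ w ∧ v ≠ w ∧ ∀ p : G.Walk u v, w ∈ p.support)
    (hdeg : 3 ≤ (G.neighborSet w).ncard) :
    3 ≤ mpNum G ∧
    ∀ a b c : V, G.Adj w a → G.Adj w b → G.Adj w c → a ≠ b → a ≠ c → b ≠ c →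
      ¬((∃ p : G.Walk a b, w ∉ p.support) ∧ (∃ q : G.Walk a c, w ∉ q.support)) →
      IsMpSet G {a, b, c} := by
  classical
  refine ⟨?_, fun a b c ha hb hc hab hac hbc hcond => key_mp ha hb hc hab hac hbc hcond⟩
  obtain ⟨u, v, huw, hvw, hsep⟩ := hcut
  have getnb : ∀ t : V, t ≠ w → ∃ x, G.Adj w x ∧ ∃ q : G.Walk t x, w ∉ q.support := by
    intro t ht
    obtain ⟨r0⟩ := hconn.preconnected w t
    obtain ⟨x, hadj, q, hq⟩ := Walk.exists_eq_cons_of_ne (Ne.symm ht) (r0.toPath : G.Walk w t)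
    have hP : ((r0.toPath : G.Walk w t)).IsPath := r0.toPath.2
    rw [hq, Walk.cons_isPath_iff] at hP
    refine ⟨x, hadj, q.reverse, ?_⟩
    rw [Walk.support_reverse, List.mem_reverse]
    exact hP.2
  obtain ⟨x, hwx, qx, hqx⟩ := getnb u huw
  obtain ⟨y, hwy, qy, hqy⟩ := getnb v hvw
  have hsepxy : ¬∃ r : G.Walk x y, w ∉ r.support := by
    rintro ⟨r, hr⟩
    have hmem := hsep (qx.append (r.append qy.reverse))
    rw [Walk.mem_support_append_iff, Walk.mem_support_append_iff, Walk.support_reverse,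
      List.mem_reverse] at hmem
    rcases hmem with h | h | h
    · exact hqx h
    · exact hr h
    · exact hqy h
  have hxy : x ≠ y := by
    rintro rfl
    exact hsepxy ⟨Walk.nil, by simpa using hwx.ne⟩
  have hz : ∃ z, G.Adj w z ∧ z ≠ x ∧ z ≠ y := by
    by_contra h
    push_neg at h
    have hsub : G.neighborSet w ⊆ {x, y} := by
      intro z hzn
      by_cases hzx : z = x
      · exact Or.inl hzx
      · exact Or.inr (h z hzn hzx)
    have h1 := Set.ncard_le_ncard hsub ((Set.finite_singleton _).insert _)
    have h2 : ({x, y} : Set V).ncard ≤ 2 := by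
      have := Set.ncard_insert_le x ({y} : Set V)
      simpa using this
    omega
  obtain ⟨z, hwz, hzx, hzy⟩ := hz
  have hmp : IsMpSet G {x, y, z} :=
    key_mp hwx hwy hwz hxy hzx.symm hzy.symm (fun h => hsepxy h.1)
  have hcard : ({x, y, z} : Set V).ncard = 3 := by
    rw [Set.ncard_insert_of_notMem (by simp [hxy, Ne.symm hzx]),
      Set.ncard_insert_of_notMem (by simp [Ne.symm hzy]), Set.ncard_singleton]
  refine le_csSup ⟨Fintype.card V, ?_⟩ ⟨{x, y, z}, hmp, hcard⟩
  rintro n ⟨S, -, rfl⟩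
  calc S.ncard ≤ (Set.univ : Set V).ncard :=
        Set.ncard_le_ncard (Set.subset_univ S) Set.finite_univ
    _ = Fintype.card V := by rw [Set.ncard_univ, Nat.card_eq_fintype_card]
end
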